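/- arXiv:1303.3034 — 6 statements merged into one kernel-verified Lean document; each statement's English description precedes it below -/
import Mathlib

section
/- Let A be a symmetric positive definite real 2×2 matrix and let a₀ > 0. Then there exists a constant C > 0 such that for every integer m ≥ 1 and every real a with a₀ ≤ a ≤ 3a₀, one has |∑_{x ∈ ℤ², |x| ≤ a·m} exp(−⟨A⁻¹x, x⟩/(2m)) − 2π m √(det A)| ≤ C √m, where |x| denotes the Euclidean norm of x and ⟨·,·⟩ the standard inner product on ℝ². -/
/-!
Write `M = A⁻¹` and `z = (x, y)`. Completing the square,
`⟨M z, z⟩ = (det M / M₁₁) x² + M₁₁ (y + (M₀₁ / M₁₁) x)²`, so the full lattice sum is an iterated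
sum of one-dimensional sums `∑ₙ exp (-β (n + μ)²)`. By comparison with the Gaussian integral each
of these is `√(π / β) + O(1)` uniformly in the shift `μ`, and multiplying out gives
`2π m / √(det M) + O(√m)`. Since `⟨M z, z⟩ ≥ (det M / tr M) |z|²`, the points outside the disc of
radius `a m ≥ a₀ m` contribute only `O(m e^{-c m}) = O(1)`.
-/

open MeasureTheory Real Matrix

section GaussianSums

open Set

theorem integral_Ioi_comp_const_add (f : ℝ → ℝ) (s : ℝ) :
    ∫ x in Ioi 0, f (s + x) = ∫ x in Ioi s, f x := by
  have h := (measurePreserving_add_left volume s).setIntegral_preimage_emb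
    (measurableEmbedding_addLeft s) f (Ioi s)
  rwa [preimage_const_add_Ioi, sub_self] at h

variable {β : ℝ}

theorem antitoneOn_exp_neg_mul_sq_const_add (hβ : 0 < β) {s : ℝ} (hs : 0 ≤ s) :
    AntitoneOn (fun x ↦ exp (-β * (s + x) ^ 2)) (Ici 0) := by
  intro x (hx : 0 ≤ x) y _ hxy
  have : (s + x) ^ 2 ≤ (s + y) ^ 2 := by gcongr
  exact exp_le_exp.2 (by nlinarith)

theorem integral_Ioi_exp_neg_mul_sq_const_add_le (hβ : 0 < β) {s : ℝ} (hs : 0 ≤ s) :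
    ∫ x in Ioi 0, exp (-β * (s + x) ^ 2) ≤ √(π / β) / 2 := by
  rw [← integral_gaussian_Ioi]
  refine setIntegral_mono_on ((integrable_exp_neg_mul_sq hβ).comp_add_left s).integrableOn
    (integrable_exp_neg_mul_sq hβ).integrableOn measurableSet_Ioi fun x (hx : 0 < x) ↦ by
      have : x ^ 2 ≤ (s + x) ^ 2 := by gcongr; linarith
      exact exp_le_exp.2 (by nlinarith)

theorem sub_le_integral_Ioi_exp_neg_mul_sq_const_add (hβ : 0 < β) {s : ℝ} (hs : 0 ≤ s) :
    √(π / β) / 2 - s ≤ ∫ x in Ioi 0, exp (-β * (s + x) ^ 2) := by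
  have hint := (integrable_exp_neg_mul_sq hβ).integrableOn (s := Ioc 0 s)
  have hsplit := setIntegral_union (Ioc_disjoint_Ioi le_rfl) measurableSet_Ioi hint
    (integrable_exp_neg_mul_sq hβ).integrableOn
  rw [Ioc_union_Ioi_eq_Ioi hs, integral_gaussian_Ioi] at hsplit
  have hbox : ‖∫ x in Ioc 0 s, exp (-β * x ^ 2)‖ ≤ 1 * volume.real (Ioc 0 s) := by
    refine norm_setIntegral_le_of_norm_le_const measure_Ioc_lt_top fun x _ ↦ ?_
    rw [norm_of_nonneg (exp_pos _).le, exp_le_one_iff]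
    nlinarith [sq_nonneg x]
  rw [Real.volume_real_Ioc_of_le hs, sub_zero, one_mul] at hbox
  rw [integral_Ioi_comp_const_add (fun x ↦ exp (-β * x ^ 2))]
  linarith [le_of_abs_le hbox]

theorem summable_nat_exp_neg_mul_sq_const_add (hβ : 0 < β) {s : ℝ} (hs : 0 ≤ s) :
    Summable fun k : ℕ ↦ exp (-β * (s + k) ^ 2) :=
  (antitoneOn_exp_neg_mul_sq_const_add hβ hs).summable_of_integrableOn_Ioi_zero
    ((integrable_exp_neg_mul_sq hβ).comp_add_left s).integrableOn fun _ _ ↦ (exp_pos _).le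

theorem tsum_nat_exp_neg_mul_sq_const_add_le (hβ : 0 < β) {s : ℝ} (hs : 0 ≤ s) :
    ∑' k : ℕ, exp (-β * (s + k) ^ 2) ≤ 1 + √(π / β) / 2 := by
  refine ((antitoneOn_exp_neg_mul_sq_const_add hβ hs).tsum_le_integral
    ((integrable_exp_neg_mul_sq hβ).comp_add_left s).integrableOn fun _ _ ↦ (exp_pos _).le).trans
    (add_le_add (exp_le_one_iff.2 ?_) (integral_Ioi_exp_neg_mul_sq_const_add_le hβ hs))
  nlinarith [sq_nonneg s]

theorem sub_le_tsum_nat_exp_neg_mul_sq_const_add (hβ : 0 < β) {s : ℝ} (hs : 0 ≤ s) :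
    √(π / β) / 2 - s ≤ ∑' k : ℕ, exp (-β * (s + k) ^ 2) :=
  (sub_le_integral_Ioi_exp_neg_mul_sq_const_add hβ hs).trans <|
    (antitoneOn_exp_neg_mul_sq_const_add hβ hs).integral_le_tsum
      (summable_nat_exp_neg_mul_sq_const_add hβ hs) fun _ _ ↦ (exp_pos _).le

/-- Split `n + μ = (n + ⌊μ⌋) + fract μ` and fold the negative indices over by evenness. -/
theorem hasSum_int_exp_neg_mul_sq_add (hβ : 0 < β) (μ : ℝ) :
    HasSum (fun n : ℤ ↦ exp (-β * (n + μ) ^ 2))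
      (∑' k : ℕ, exp (-β * (Int.fract μ + k) ^ 2) +
        ∑' k : ℕ, exp (-β * ((1 - Int.fract μ) + k) ^ 2)) := by
  have hfract := Int.fract_nonneg μ
  have h1fract : 0 ≤ 1 - Int.fract μ := by linarith [Int.fract_lt_one μ]
  have hshift : HasSum (fun n : ℤ ↦ exp (-β * (n + Int.fract μ) ^ 2)) _ :=
    HasSum.of_nat_of_neg_add_one
      (by simpa only [Int.cast_natCast, add_comm] using
        (summable_nat_exp_neg_mul_sq_const_add hβ hfract).hasSum)
      (by
        convert (summable_nat_exp_neg_mul_sq_const_add hβ h1fract).hasSum using 3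
        push_cast
        ring)
  rw [← (Equiv.addRight ⌊μ⌋).hasSum_iff] at hshift
  convert hshift using 3 with n
  simp only [Function.comp_apply, Equiv.coe_addRight, Int.cast_add, Int.fract]
  ring_nf

theorem summable_int_exp_neg_mul_sq_add (hβ : 0 < β) (μ : ℝ) :
    Summable fun n : ℤ ↦ exp (-β * (n + μ) ^ 2) :=
  (hasSum_int_exp_neg_mul_sq_add hβ μ).summable

theorem abs_tsum_int_exp_neg_mul_sq_add_sub_le (hβ : 0 < β) (μ : ℝ) :
    |∑' n : ℤ, exp (-β * (n + μ) ^ 2) - √(π / β)| ≤ 2 := by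
  have hfract := Int.fract_nonneg μ
  have h1fract : 0 ≤ 1 - Int.fract μ := by linarith [Int.fract_lt_one μ]
  rw [(hasSum_int_exp_neg_mul_sq_add hβ μ).tsum_eq, abs_le]
  constructor <;>
  linarith [sub_le_tsum_nat_exp_neg_mul_sq_const_add hβ hfract,
    sub_le_tsum_nat_exp_neg_mul_sq_const_add hβ h1fract,
    tsum_nat_exp_neg_mul_sq_const_add_le hβ hfract, tsum_nat_exp_neg_mul_sq_const_add_le hβ h1fract]

theorem summable_int_exp_neg_mul_sq (hβ : 0 < β) : Summable fun n : ℤ ↦ exp (-β * n ^ 2) := by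
  simpa using summable_int_exp_neg_mul_sq_add hβ 0

theorem abs_tsum_int_exp_neg_mul_sq_sub_le (hβ : 0 < β) :
    |∑' n : ℤ, exp (-β * n ^ 2) - √(π / β)| ≤ 2 := by
  simpa using abs_tsum_int_exp_neg_mul_sq_add_sub_le hβ 0

end GaussianSums

section ProductSums

variable {α β : Type*} {g : α → ℝ} {h : α → β → ℝ}

theorem summable_prod_mul_of_tsum_le (hg : ∀ x, 0 ≤ g x) (hh : ∀ x y, 0 ≤ h x y)
    (hgs : Summable g) (hhs : ∀ x, Summable (h x)) {B : ℝ} (hB : ∀ x, ∑' y, h x y ≤ B) :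
    Summable fun z : α × β ↦ g z.1 * h z.1 z.2 := by
  have h0 : 0 ≤ fun z : α × β ↦ g z.1 * h z.1 z.2 := fun z ↦ mul_nonneg (hg _) (hh _ _)
  refine (summable_prod_of_nonneg h0).2 ⟨fun x ↦ (hhs x).mul_left (g x), ?_⟩
  simp only [tsum_mul_left]
  exact (hgs.mul_right B).of_nonneg_of_le (fun x ↦ mul_nonneg (hg x) (tsum_nonneg (hh x)))
    fun x ↦ mul_le_mul_of_nonneg_left (hB x) (hg x)

theorem abs_tsum_prod_mul_sub_mul_le (hg : ∀ x, 0 ≤ g x) (hh : ∀ x y, 0 ≤ h x y)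
    (hgs : Summable g) (hhs : ∀ x, Summable (h x)) {K₁ K₂ ε₁ ε₂ : ℝ} (hK₂ : 0 ≤ K₂)
    (hε₂ : 0 ≤ ε₂) (hgK : |∑' x, g x - K₁| ≤ ε₁) (hhK : ∀ x, |∑' y, h x y - K₂| ≤ ε₂) :
    |∑' z : α × β, g z.1 * h z.1 z.2 - K₁ * K₂| ≤ ε₂ * (K₁ + ε₁) + K₂ * ε₁ := by
  have hH : ∀ x, ∑' y, h x y ≤ K₂ + ε₂ := fun x ↦ by linarith [le_of_abs_le (hhK x)]
  have hsum := summable_prod_mul_of_tsum_le hg hh hgs hhs hH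
  have hgH : Summable fun x ↦ g x * ∑' y, h x y := by
    simpa only [tsum_mul_left] using hsum.prod
  have hfiber : ∑' z : α × β, g z.1 * h z.1 z.2 - K₂ * ∑' x, g x =
      ∑' x, g x * (∑' y, h x y - K₂) := by
    rw [hsum.tsum_prod' fun x ↦ (hhs x).mul_left (g x)]
    simp only [tsum_mul_left, mul_sub]
    rw [hgH.tsum_sub (hgs.mul_right K₂), tsum_mul_right, mul_comm]
  have hinner : |∑' z : α × β, g z.1 * h z.1 z.2 - K₂ * ∑' x, g x| ≤ ε₂ * ∑' x, g x := by
    rw [hfiber, ← tsum_mul_left, ← norm_eq_abs]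
    refine tsum_of_norm_bounded (hgs.mul_left ε₂).hasSum fun x ↦ ?_
    rw [norm_mul, norm_of_nonneg (hg x), mul_comm]
    exact mul_le_mul_of_nonneg_right (hhK x) (hg x)
  have houter : |K₂ * ∑' x, g x - K₁ * K₂| ≤ K₂ * ε₁ := by
    rw [mul_comm K₁, ← mul_sub, abs_mul, abs_of_nonneg hK₂]
    exact mul_le_mul_of_nonneg_left hgK hK₂
  have hgsum : ε₂ * ∑' x, g x ≤ ε₂ * (K₁ + ε₁) :=
    mul_le_mul_of_nonneg_left (by linarith [le_of_abs_le hgK]) hε₂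
  linarith [abs_sub_le (∑' z : α × β, g z.1 * h z.1 z.2) (K₂ * ∑' x, g x) (K₁ * K₂)]

end ProductSums

namespace Matrix

variable {M : Matrix (Fin 2) (Fin 2) ℝ}

theorem IsHermitian.mulVec_dotProduct_fin_two (hM : M.IsHermitian) (x y : ℝ) :
    M *ᵥ ![x, y] ⬝ᵥ ![x, y] = M 0 0 * x ^ 2 + 2 * M 0 1 * x * y + M 1 1 * y ^ 2 := by
  have h10 : M 1 0 = M 0 1 := by simpa using hM.apply 0 1
  simp only [dotProduct, mulVec, Fin.sum_univ_two, cons_val_zero, cons_val_one,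
    cons_val_fin_one, h10]
  ring

theorem IsHermitian.mulVec_dotProduct_fin_two_eq_add_sq (hM : M.IsHermitian) (h11 : M 1 1 ≠ 0)
    (x y : ℝ) :
    M *ᵥ ![x, y] ⬝ᵥ ![x, y] = M.det / M 1 1 * x ^ 2 + M 1 1 * (y + M 0 1 / M 1 1 * x) ^ 2 := by
  have h10 : M 1 0 = M 0 1 := by simpa using hM.apply 0 1
  rw [hM.mulVec_dotProduct_fin_two, det_fin_two, h10]
  field_simp
  ring

theorem IsHermitian.det_div_trace_mul_le_mulVec_dotProduct_fin_two (hM : M.IsHermitian)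
    (htr : 0 < M.trace) (x y : ℝ) :
    M.det / M.trace * (x ^ 2 + y ^ 2) ≤ M *ᵥ ![x, y] ⬝ᵥ ![x, y] := by
  have h10 : M 1 0 = M 0 1 := by simpa using hM.apply 0 1
  rw [trace_fin_two] at htr ⊢
  rw [hM.mulVec_dotProduct_fin_two, det_fin_two, h10, div_mul_eq_mul_div, div_le_iff₀ htr]
  -- for `M = !![p, q; q, r]`: `(p + r) ⟨M v, v⟩ - (p r - q²) |v|² = (p x + q y)² + (q x + r y)²`
  nlinarith [sq_nonneg (M 0 0 * x + M 0 1 * y), sq_nonneg (M 0 1 * x + M 1 1 * y)]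

end Matrix

theorem mul_exp_neg_mul_le_inv {κ : ℝ} (hκ : 0 < κ) (t : ℝ) : t * exp (-(κ * t)) ≤ κ⁻¹ := by
  rw [exp_neg, ← div_eq_mul_inv, div_le_iff₀ (exp_pos _), le_inv_mul_iff₀ hκ]
  linarith [add_one_le_exp (κ * t)]

noncomputable def latticeGaussian (M : Matrix (Fin 2) (Fin 2) ℝ) (t : ℝ) (z : ℤ × ℤ) : ℝ :=
  exp (-(M *ᵥ ![(z.1 : ℝ), (z.2 : ℝ)] ⬝ᵥ ![(z.1 : ℝ), (z.2 : ℝ)]) / (2 * t))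

section LatticeGaussian

variable {M : Matrix (Fin 2) (Fin 2) ℝ} {t : ℝ}

theorem latticeGaussian_eq_mul (hM : M.IsHermitian) (h11 : M 1 1 ≠ 0) (t : ℝ) (z : ℤ × ℤ) :
    latticeGaussian M t z = exp (-(M.det / M 1 1 / (2 * t)) * (z.1 : ℝ) ^ 2) *
      exp (-(M 1 1 / (2 * t)) * ((z.2 : ℝ) + M 0 1 / M 1 1 * z.1) ^ 2) := by
  rw [latticeGaussian, ← exp_add, hM.mulVec_dotProduct_fin_two_eq_add_sq h11]
  ring_nf

theorem summable_latticeGaussian (hM : M.PosDef) (ht : 0 < t) : Summable (latticeGaussian M t) := by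
  have h11 : 0 < M 1 1 := hM.diag_pos
  have hβ₁ : 0 < M.det / M 1 1 / (2 * t) := by have := hM.det_pos; positivity
  have hβ₂ : 0 < M 1 1 / (2 * t) := by positivity
  rw [funext (latticeGaussian_eq_mul hM.isHermitian h11.ne' t)]
  exact summable_prod_mul_of_tsum_le
    (g := fun x : ℤ ↦ exp (-(M.det / M 1 1 / (2 * t)) * (x : ℝ) ^ 2))
    (h := fun x y : ℤ ↦ exp (-(M 1 1 / (2 * t)) * ((y : ℝ) + M 0 1 / M 1 1 * x) ^ 2))
    (fun _ ↦ (exp_pos _).le) (fun _ _ ↦ (exp_pos _).le)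
    (summable_int_exp_neg_mul_sq hβ₁) (fun x ↦ summable_int_exp_neg_mul_sq_add hβ₂ _)
    (B := √(π / (M 1 1 / (2 * t))) + 2) fun x ↦ by
      linarith [le_of_abs_le (abs_tsum_int_exp_neg_mul_sq_add_sub_le hβ₂ (M 0 1 / M 1 1 * x))]

theorem sqrt_pi_div_div_mul (c k : ℝ) (ht : 0 ≤ t) :
    √(π / (c / (k * t))) = √(k * π / c) * √t := by
  rw [← sqrt_mul' _ ht]
  congr 1
  field_simp

theorem exists_abs_tsum_latticeGaussian_sub_le (hM : M.PosDef) :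
    ∃ C, 0 ≤ C ∧ ∀ t, 1 ≤ t →
      |∑' z, latticeGaussian M t z - 2 * π * t / √M.det| ≤ C * √t := by
  have h11 : 0 < M 1 1 := hM.diag_pos
  have hdet : 0 < M.det := hM.det_pos
  refine ⟨2 * √(2 * π * M 1 1 / M.det) + 2 * √(2 * π / M 1 1) + 4, by positivity, fun t ht ↦ ?_⟩
  have ht0 : 0 < t := by linarith
  have hβ₁ : 0 < M.det / M 1 1 / (2 * t) := by positivity
  have hβ₂ : 0 < M 1 1 / (2 * t) := by positivity
  have hK :
      √(π / (M.det / M 1 1 / (2 * t))) * √(π / (M 1 1 / (2 * t))) = 2 * π * t / √M.det := by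
    rw [← sqrt_mul (by positivity), div_eq_mul_inv _ (√_), ← sqrt_inv,
      ← sqrt_sq (by positivity : 0 ≤ 2 * π * t), ← sqrt_mul (by positivity)]
    congr 1
    field_simp
  have hsplit := abs_tsum_prod_mul_sub_mul_le
    (g := fun x : ℤ ↦ exp (-(M.det / M 1 1 / (2 * t)) * (x : ℝ) ^ 2))
    (h := fun x y : ℤ ↦ exp (-(M 1 1 / (2 * t)) * ((y : ℝ) + M 0 1 / M 1 1 * x) ^ 2))
    (fun _ ↦ (exp_pos _).le) (fun _ _ ↦ (exp_pos _).le) (summable_int_exp_neg_mul_sq hβ₁)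
    (fun x ↦ summable_int_exp_neg_mul_sq_add hβ₂ _) (sqrt_nonneg _) zero_le_two
    (abs_tsum_int_exp_neg_mul_sq_sub_le hβ₁) fun x ↦ abs_tsum_int_exp_neg_mul_sq_add_sub_le hβ₂ _
  rw [hK, sqrt_pi_div_div_mul _ _ ht0.le, sqrt_pi_div_div_mul _ _ ht0.le] at hsplit
  rw [funext (latticeGaussian_eq_mul hM.isHermitian h11.ne' t)]
  linarith [one_le_sqrt.2 ht]

theorem latticeGaussian_le_exp (hM : M.IsHermitian) (htr : 0 < M.trace) (ht : 0 < t)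
    (z : ℤ × ℤ) :
    latticeGaussian M t z ≤
      exp (-(M.det / M.trace / (2 * t)) * ((z.1 : ℝ) ^ 2 + (z.2 : ℝ) ^ 2)) := by
  have h := div_le_div_of_nonneg_right
    (hM.det_div_trace_mul_le_mulVec_dotProduct_fin_two htr z.1 z.2) (by positivity : 0 ≤ 2 * t)
  rw [latticeGaussian, exp_le_exp, neg_div, neg_mul, neg_le_neg_iff, div_mul_eq_mul_div]
  exact h

theorem latticeGaussian_le_mul_of_sq_le (hM : M.PosDef) (ht : 0 < t) {R : ℝ} {z : ℤ × ℤ}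
    (hR : R ^ 2 ≤ (z.1 : ℝ) ^ 2 + (z.2 : ℝ) ^ 2) :
    latticeGaussian M t z ≤ exp (-(M.det / M.trace / (4 * t)) * R ^ 2) *
      (exp (-(M.det / M.trace / (4 * t)) * (z.1 : ℝ) ^ 2) *
        exp (-(M.det / M.trace / (4 * t)) * (z.2 : ℝ) ^ 2)) := by
  have hδ : 0 < M.det / M.trace / (4 * t) := by
    have := hM.det_pos; have := hM.trace_pos; positivity
  calc latticeGaussian M t z
      ≤ exp (-(M.det / M.trace / (2 * t)) * ((z.1 : ℝ) ^ 2 + (z.2 : ℝ) ^ 2)) :=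
        latticeGaussian_le_exp hM.isHermitian hM.trace_pos ht z
    _ = exp (-(M.det / M.trace / (4 * t)) * ((z.1 : ℝ) ^ 2 + (z.2 : ℝ) ^ 2)) *
        (exp (-(M.det / M.trace / (4 * t)) * (z.1 : ℝ) ^ 2) *
          exp (-(M.det / M.trace / (4 * t)) * (z.2 : ℝ) ^ 2)) := by
        rw [← exp_add, ← exp_add]
        ring_nf
    _ ≤ _ := mul_le_mul_of_nonneg_right (exp_le_exp.2 (by nlinarith)) (by positivity)

theorem abs_tsum_ite_latticeGaussian_sub_le (hM : M.PosDef) (ht : 0 < t) (R : ℝ) :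
    |∑' z : ℤ × ℤ, (if (z.1 : ℝ) ^ 2 + (z.2 : ℝ) ^ 2 ≤ R ^ 2 then latticeGaussian M t z else 0) -
        ∑' z, latticeGaussian M t z| ≤
      exp (-(M.det / M.trace / (4 * t)) * R ^ 2) *
        (√(π / (M.det / M.trace / (4 * t))) + 2) ^ 2 := by
  set δ := M.det / M.trace / (4 * t)
  have hδ : 0 < δ := by have := hM.det_pos; have := hM.trace_pos; positivity
  set tail : ℤ × ℤ → ℝ := fun z ↦
    if (z.1 : ℝ) ^ 2 + (z.2 : ℝ) ^ 2 ≤ R ^ 2 then 0 else latticeGaussian M t z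
  have htail_nonneg : ∀ z, 0 ≤ tail z := fun z ↦ ite_nonneg le_rfl (exp_pos _).le
  have htail_le : ∀ z, tail z ≤ exp (-δ * R ^ 2) *
      (exp (-δ * (z.1 : ℝ) ^ 2) * exp (-δ * (z.2 : ℝ) ^ 2)) := fun z ↦ by
    simp only [tail]
    split_ifs with hz
    · positivity
    · exact latticeGaussian_le_mul_of_sq_le hM ht (not_le.1 hz).le
  have hsum := summable_latticeGaussian hM ht
  have htail_summable : Summable tail := hsum.of_nonneg_of_le htail_nonneg fun z ↦ by
    simp only [tail]; split_ifs; exacts [(exp_pos _).le, le_rfl]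
  have hφ := summable_int_exp_neg_mul_sq hδ
  have hφφ := hφ.mul_of_nonneg hφ (fun _ ↦ (exp_pos _).le) fun _ ↦ (exp_pos _).le
  have hsplit : ∑' z : ℤ × ℤ,
      (if (z.1 : ℝ) ^ 2 + (z.2 : ℝ) ^ 2 ≤ R ^ 2 then latticeGaussian M t z else 0) =
      ∑' z, latticeGaussian M t z - ∑' z, tail z := by
    rw [← hsum.tsum_sub htail_summable]
    congr 1 with z
    simp only [tail]
    split_ifs <;> ring
  rw [hsplit, sub_sub_cancel_left, abs_neg, abs_of_nonneg (tsum_nonneg htail_nonneg)]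
  calc ∑' z, tail z
      ≤ ∑' z : ℤ × ℤ, exp (-δ * R ^ 2) * (exp (-δ * (z.1 : ℝ) ^ 2) * exp (-δ * (z.2 : ℝ) ^ 2)) :=
        htail_summable.tsum_le_tsum htail_le (hφφ.mul_left _)
    _ = exp (-δ * R ^ 2) * (∑' n : ℤ, exp (-δ * (n : ℝ) ^ 2)) ^ 2 := by
        rw [tsum_mul_left, ← hφ.tsum_mul_tsum hφ hφφ, ← sq]
    _ ≤ exp (-δ * R ^ 2) * (√(π / δ) + 2) ^ 2 := by
        gcongr
        linarith [le_of_abs_le (abs_tsum_int_exp_neg_mul_sq_sub_le hδ)]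

theorem exists_abs_tsum_ite_latticeGaussian_sub_le (hM : M.PosDef) {a₀ : ℝ} (ha₀ : 0 < a₀) :
    ∃ C, 0 ≤ C ∧ ∀ t, 1 ≤ t → ∀ R, a₀ * t ≤ R →
      |∑' z : ℤ × ℤ, (if (z.1 : ℝ) ^ 2 + (z.2 : ℝ) ^ 2 ≤ R ^ 2 then latticeGaussian M t z else 0) -
        ∑' z, latticeGaussian M t z| ≤ C := by
  set ℓ := M.det / M.trace
  have hℓ : 0 < ℓ := by have := hM.det_pos; have := hM.trace_pos; positivity
  set κ := ℓ * a₀ ^ 2 / 4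
  have hκ : 0 < κ := by positivity
  set c := √(4 * π / ℓ)
  refine ⟨(c + 2) ^ 2 * κ⁻¹, by positivity, fun t ht R hR ↦ ?_⟩
  have ht0 : 0 < t := by linarith
  have hsqrt_t : 1 ≤ √t := one_le_sqrt.2 ht
  refine (abs_tsum_ite_latticeGaussian_sub_le hM ht0 R).trans ?_
  have hexp : exp (-(ℓ / (4 * t)) * R ^ 2) ≤ exp (-(κ * t)) := by
    have hR2 : (a₀ * t) ^ 2 ≤ R ^ 2 := pow_le_pow_left₀ (by positivity) hR 2
    have hκt : κ * t = ℓ / (4 * t) * (a₀ * t) ^ 2 := by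
      simp only [κ]
      field_simp
    rw [exp_le_exp, neg_mul, neg_le_neg_iff, hκt]
    exact mul_le_mul_of_nonneg_left hR2 (by positivity)
  have hsq : (√(π / (ℓ / (4 * t))) + 2) ^ 2 ≤ (c + 2) ^ 2 * t := by
    rw [sqrt_pi_div_div_mul _ _ ht0.le]
    calc (c * √t + 2) ^ 2 ≤ ((c + 2) * √t) ^ 2 := by gcongr; linarith
      _ = (c + 2) ^ 2 * t := by rw [mul_pow, sq_sqrt ht0.le]
  calc exp (-(ℓ / (4 * t)) * R ^ 2) * (√(π / (ℓ / (4 * t))) + 2) ^ 2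
      ≤ exp (-(κ * t)) * ((c + 2) ^ 2 * t) := by gcongr
    _ = (c + 2) ^ 2 * (t * exp (-(κ * t))) := by ring
    _ ≤ (c + 2) ^ 2 * κ⁻¹ := by gcongr; exact mul_exp_neg_mul_le_inv hκ t

end LatticeGaussian

/-- Series–integral comparison estimate (equation (clef)): for a symmetric positive
definite real 2×2 matrix `A` and `a₀ > 0`, the lattice Gaussian sum over points of
norm at most `a·m` equals `2π m √(det A)` up to an error `O(√m)`, uniformly in
`a ∈ [a₀, 3a₀]`. -/
theorem gaussian_lattice_sum_estimate
    (A : Matrix (Fin 2) (Fin 2) ℝ) (hA : A.PosDef) (a₀ : ℝ) (ha₀ : 0 < a₀) :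
    ∃ C > 0, ∀ m : ℕ, 1 ≤ m → ∀ a : ℝ, a₀ ≤ a → a ≤ 3 * a₀ →
      |(∑' x : ℤ × ℤ,
          if (x.1 : ℝ) ^ 2 + (x.2 : ℝ) ^ 2 ≤ (a * m) ^ 2 then
            Real.exp (-(A⁻¹.mulVec ![(x.1 : ℝ), (x.2 : ℝ)] ⬝ᵥ ![(x.1 : ℝ), (x.2 : ℝ)])
              / (2 * m))
          else 0)
        - 2 * Real.pi * m * Real.sqrt A.det| ≤ C * Real.sqrt m := by
  obtain ⟨C₁, hC₁, hfull⟩ := exists_abs_tsum_latticeGaussian_sub_le hA.inv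
  obtain ⟨C₂, hC₂, htrunc⟩ := exists_abs_tsum_ite_latticeGaussian_sub_le hA.inv ha₀
  have hdet : √A⁻¹.det = (√A.det)⁻¹ := by rw [det_nonsing_inv, Ring.inverse_eq_inv, sqrt_inv]
  refine ⟨C₁ + C₂ + 1, by linarith, fun m hm a ha _ ↦ ?_⟩
  have hm' : (1 : ℝ) ≤ m := by exact_mod_cast hm
  have h₁ := hfull m hm'
  rw [hdet, div_inv_eq_mul] at h₁
  have h₂ := htrunc m hm' (a * m) (by gcongr)
  have hsqrt_m : 1 ≤ √(m : ℝ) := one_le_sqrt.2 hm'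
  calc _ ≤ _ := abs_sub_le _ (∑' z, latticeGaussian A⁻¹ m z) _
    _ ≤ C₂ + C₁ * √(m : ℝ) := add_le_add h₂ h₁
    _ ≤ (C₁ + C₂ + 1) * √(m : ℝ) := by nlinarith
end

section
/- The function (u, v, w) ↦ (1 − (u + v + w))·𝟙_{u+v+w ≤ 1}/(uv + uw + vw) is Lebesgue integrable on the cube [0,1]³; in particular the constant J := ∫_{[0,1]³} (1 − (u + v + w))·𝟙_{u+v+w ≤ 1}/(uv + uw + vw) du dv dw is finite. -/
/-! The numerator is at most `1` and, by AM–GM, `uv + uw + vw ≥ (uvw)^{2/3}`; so off the null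
boundary of the cube the integrand is dominated by `u^{-2/3} v^{-2/3} w^{-2/3}`, a product of
functions integrable on `(0, 1)`. -/

open MeasureTheory Set

theorem MeasureTheory.IntegrableOn.mul_prod {α β L : Type*} [MeasurableSpace α]
    [MeasurableSpace β] [NormedRing L] {μ : Measure α} {ν : Measure β}
    [SFinite μ] [SFinite ν] {f : α → L} {g : β → L} {s : Set α} {t : Set β}
    (hf : IntegrableOn f s μ) (hg : IntegrableOn g t ν) :
    IntegrableOn (fun p : α × β => f p.1 * g p.2) (s ×ˢ t) (μ.prod ν) := by
  rw [IntegrableOn, ← Measure.prod_restrict]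
  exact Integrable.mul_prod hf hg

theorem rpow_two_thirds_le_mul_add_mul_add_mul {a b c : ℝ} (ha : 0 ≤ a) (hb : 0 ≤ b)
    (hc : 0 ≤ c) : (a * b * c) ^ (2 / 3 : ℝ) ≤ a * b + a * c + b * c := by
  have hab := mul_nonneg ha hb
  have hac := mul_nonneg ha hc
  have hbc := mul_nonneg hb hc
  have hsplit : (a * b * c) ^ (2 / 3 : ℝ)
      = (a * b) ^ (1 / 3 : ℝ) * (a * c) ^ (1 / 3 : ℝ) * (b * c) ^ (1 / 3 : ℝ) := by
    rw [← Real.mul_rpow hab hac, ← Real.mul_rpow (mul_nonneg hab hac) hbc,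
      show a * b * (a * c) * (b * c) = (a * b * c) ^ 2 by ring,
      ← Real.rpow_natCast, ← Real.rpow_mul (by positivity)]
    norm_num
  have amgm := Real.geom_mean_le_arith_mean3_weighted (w₁ := 1 / 3) (w₂ := 1 / 3)
    (w₃ := 1 / 3) (by norm_num) (by norm_num) (by norm_num) hab hac hbc (by norm_num)
  rw [hsplit]
  linarith

theorem inv_mul_add_mul_add_mul_le_rpow {u v w : ℝ} (hu : 0 < u) (hv : 0 < v) (hw : 0 < w) :
    (u * v + u * w + v * w)⁻¹
      ≤ u ^ (-(2 / 3) : ℝ) * (v ^ (-(2 / 3) : ℝ) * w ^ (-(2 / 3) : ℝ)) := by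
  rw [← Real.mul_rpow hv.le hw.le, ← Real.mul_rpow hu.le (by positivity), ← mul_assoc,
    Real.rpow_neg (by positivity)]
  exact inv_anti₀ (by positivity)
    (rpow_two_thirds_le_mul_add_mul_add_mul hu.le hv.le hw.le)

theorem norm_J_integrand_le {u v w : ℝ} (hu : 0 < u) (hv : 0 < v) (hw : 0 < w) :
    ‖if u + v + w ≤ 1 then (1 - (u + v + w)) / (u * v + u * w + v * w) else 0‖
      ≤ u ^ (-(2 / 3) : ℝ) * (v ^ (-(2 / 3) : ℝ) * w ^ (-(2 / 3) : ℝ)) := by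
  split_ifs with hle
  · have hden : 0 < u * v + u * w + v * w := by positivity
    calc ‖(1 - (u + v + w)) / (u * v + u * w + v * w)‖
        = (1 - (u + v + w)) * (u * v + u * w + v * w)⁻¹ := by
          rw [Real.norm_of_nonneg (div_nonneg (by linarith) hden.le), div_eq_mul_inv]
      _ ≤ 1 * (u * v + u * w + v * w)⁻¹ := by gcongr; linarith
      _ ≤ _ := by rw [one_mul]; exact inv_mul_add_mul_add_mul_le_rpow hu hv hw
  · rw [norm_zero]
    positivity

/-- The integrand of the constant `J` appearing in the asymptotic variance is
Lebesgue integrable on the cube `[0,1]³`; in particular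
`J = ∫_{[0,1]³} (1 − (u+v+w))·𝟙_{u+v+w ≤ 1}/(uv+uw+vw) du dv dw` is finite. -/
theorem integrable_J_integrand :
    IntegrableOn
      (fun p : ℝ × ℝ × ℝ =>
        if p.1 + p.2.1 + p.2.2 ≤ 1 then
          (1 - (p.1 + p.2.1 + p.2.2)) / (p.1 * p.2.1 + p.1 * p.2.2 + p.2.1 * p.2.2)
        else 0)
      (Set.Icc 0 1 ×ˢ Set.Icc 0 1 ×ˢ Set.Icc 0 1) volume := by
  have hcube : (Icc 0 1 ×ˢ Icc 0 1 ×ˢ Icc 0 1 : Set (ℝ × ℝ × ℝ))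
      =ᵐ[volume] Ioo 0 1 ×ˢ Ioo 0 1 ×ˢ Ioo 0 1 :=
    Measure.set_prod_ae_eq Ioo_ae_eq_Icc.symm
      (Measure.set_prod_ae_eq Ioo_ae_eq_Icc.symm Ioo_ae_eq_Icc.symm)
  have hpow : IntegrableOn (fun x : ℝ => x ^ (-(2 / 3) : ℝ)) (Ioo 0 1) :=
    (intervalIntegral.integrableOn_Ioo_rpow_iff one_pos).2 (by norm_num)
  have hdom := hpow.mul_prod (hpow.mul_prod hpow)
  refine IntegrableOn.congr_set_ae (Integrable.mono' hdom ?_ ?_) hcube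
  · refine Measurable.aestronglyMeasurable (Measurable.ite ?_ (by fun_prop) measurable_const)
    exact measurableSet_le (by fun_prop) measurable_const
  · refine ae_restrict_of_forall_mem
      (measurableSet_Ioo.prod (measurableSet_Ioo.prod measurableSet_Ioo)) ?_
    rintro ⟨u, v, w⟩ ⟨hu, hv, hw⟩
    exact norm_J_integrand_le hu.1 hv.1 hw.1
end

section
/- One has lim_{n→∞} n^{−2} · ∑_{(k₁, m₀, m₁, m₂)} min(m₀, m₁, m₂)^{−1/2}/(m₀m₁ + m₀m₂ + m₁m₂) = 0, where the sum ranges over all quadruples of positive integers (k₁, m₀, m₁, m₂) with k₁ + m₀ + m₁ + m₂ ≤ n. -/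
open MeasureTheory Filter

/-- Partial sums of `m^(-α)` for `0 ≤ α < 1` grow like `n^(1-α)/(1-α)`. -/
lemma aux_sum_rpow_neg_le (α : ℝ) (h0 : 0 ≤ α) (h1 : α < 1) (n : ℕ) :
    ∑ m ∈ Finset.Icc 1 n, (m : ℝ) ^ (-α) ≤ (n : ℝ) ^ (1 - α) / (1 - α) := by
  have h1' : (0:ℝ) < 1 - α := by linarith
  induction n with
  | zero => simpa using div_nonneg (Real.rpow_nonneg le_rfl _) h1'.le
  | succ n ih =>
    rw [Finset.sum_Icc_succ_top (by omega)]
    have hn1 : (0:ℝ) < (n:ℝ) + 1 := by positivity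
    have hamgm : (n:ℝ) ^ (1-α) * ((n:ℝ)+1) ^ α ≤ (1-α) * n + α * ((n:ℝ)+1) :=
      Real.geom_mean_le_arith_mean2_weighted (le_of_lt h1') h0 (by positivity)
        (le_of_lt hn1) (by ring)
    have hpow : ((n:ℝ)+1) ^ (1-α) = (((n:ℝ)+1)) * (((n:ℝ)+1)) ^ (-α) := by
      have h := Real.rpow_add hn1 1 (-α)
      rw [Real.rpow_one] at h
      rw [show (1:ℝ) - α = 1 + -α by ring, h]
    have hinv : ((n:ℝ)+1)^α * ((n:ℝ)+1)^(-α) = 1 := by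
      rw [← Real.rpow_add hn1]; simp
    have hmul : (n:ℝ)^(1-α) ≤ ((n:ℝ) + α) * ((n:ℝ)+1)^(-α) := by
      calc (n:ℝ)^(1-α) = ((n:ℝ)^(1-α) * ((n:ℝ)+1)^α) * ((n:ℝ)+1)^(-α) := by
            rw [mul_assoc, hinv, mul_one]
        _ ≤ ((1-α)*n + α*((n:ℝ)+1)) * ((n:ℝ)+1)^(-α) :=
            mul_le_mul_of_nonneg_right hamgm (Real.rpow_nonneg (le_of_lt hn1) _)
        _ = ((n:ℝ)+α) * ((n:ℝ)+1)^(-α) := by ring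
    have key : (n:ℝ)^(1-α) + (1-α)*((n:ℝ)+1)^(-α) ≤ ((n:ℝ)+1)^(1-α) := by
      rw [hpow]; nlinarith [hmul]
    have hfin : (n:ℝ)^(1-α)/(1-α) + ((n:ℝ)+1)^(-α) ≤ ((n:ℝ)+1)^(1-α)/(1-α) := by
      rw [le_div_iff₀ h1', add_mul, div_mul_cancel₀ _ h1'.ne']
      nlinarith [key]
    push_cast
    linarith [ih, hfin]

/-- Basic bound for one of the three symmetric pieces. -/
lemma aux_H (a b c : ℕ) (ha : 1 ≤ a) (hb : 1 ≤ b) (hc : 1 ≤ c) :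
    (a:ℝ)^(-(1/2:ℝ)) / ((a:ℝ)*(b:ℝ) + (a:ℝ)*(c:ℝ) + (b:ℝ)*(c:ℝ)) ≤
    (a:ℝ)^(-(1/2:ℝ)) * ((b:ℝ)^(-(7/8:ℝ)) * (c:ℝ)^(-(7/8:ℝ))) := by
  have ha1 : (1:ℝ) ≤ a := by exact_mod_cast ha
  have hb1 : (1:ℝ) ≤ b := by exact_mod_cast hb
  have hc1 : (1:ℝ) ≤ c := by exact_mod_cast hc
  have hbc : (1:ℝ) ≤ (b:ℝ)*(c:ℝ) := by nlinarith
  have hbc0 : (0:ℝ) < (b:ℝ)*(c:ℝ) := by linarith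
  have hden : (b:ℝ)*(c:ℝ) ≤ (a:ℝ)*(b:ℝ) + (a:ℝ)*(c:ℝ) + (b:ℝ)*(c:ℝ) := by nlinarith
  have hnum : (0:ℝ) ≤ (a:ℝ)^(-(1/2:ℝ)) := Real.rpow_nonneg (by positivity) _
  calc (a:ℝ)^(-(1/2:ℝ)) / ((a:ℝ)*(b:ℝ) + (a:ℝ)*(c:ℝ) + (b:ℝ)*(c:ℝ))
      ≤ (a:ℝ)^(-(1/2:ℝ)) / ((b:ℝ)*(c:ℝ)) :=
        div_le_div_of_nonneg_left hnum hbc0 hden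
    _ = (a:ℝ)^(-(1/2:ℝ)) * ((b:ℝ)*(c:ℝ))⁻¹ := div_eq_mul_inv _ _
    _ ≤ (a:ℝ)^(-(1/2:ℝ)) * ((b:ℝ)^(-(7/8:ℝ)) * (c:ℝ)^(-(7/8:ℝ))) := by
        apply mul_le_mul_of_nonneg_left _ hnum
        rw [← Real.rpow_neg_one ((b:ℝ)*(c:ℝ)),
          ← Real.mul_rpow (by positivity) (by positivity)]
        exact Real.rpow_le_rpow_of_exponent_le hbc (by norm_num)

/-- Termwise bound on the summand. -/
lemma aux_term (a b c : ℕ) (ha : 1 ≤ a) (hb : 1 ≤ b) (hc : 1 ≤ c) :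
    ((min a (min b c) : ℕ) : ℝ) ^ (-(1/2:ℝ)) /
        ((a:ℝ)*(b:ℝ) + (a:ℝ)*(c:ℝ) + (b:ℝ)*(c:ℝ)) ≤
    (a:ℝ)^(-(1/2:ℝ)) * ((b:ℝ)^(-(7/8:ℝ)) * (c:ℝ)^(-(7/8:ℝ)))
    + (b:ℝ)^(-(1/2:ℝ)) * ((a:ℝ)^(-(7/8:ℝ)) * (c:ℝ)^(-(7/8:ℝ)))
    + (c:ℝ)^(-(1/2:ℝ)) * ((a:ℝ)^(-(7/8:ℝ)) * (b:ℝ)^(-(7/8:ℝ))) := by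
  have P1 : (0:ℝ) ≤ (a:ℝ)^(-(1/2:ℝ)) * ((b:ℝ)^(-(7/8:ℝ)) * (c:ℝ)^(-(7/8:ℝ))) := by positivity
  have P2 : (0:ℝ) ≤ (b:ℝ)^(-(1/2:ℝ)) * ((a:ℝ)^(-(7/8:ℝ)) * (c:ℝ)^(-(7/8:ℝ))) := by positivity
  have P3 : (0:ℝ) ≤ (c:ℝ)^(-(1/2:ℝ)) * ((a:ℝ)^(-(7/8:ℝ)) * (b:ℝ)^(-(7/8:ℝ))) := by positivity
  rcases le_total a (min b c) with h | h
  · rw [min_eq_left h]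
    linarith [aux_H a b c ha hb hc]
  · rcases le_total b c with h2 | h2
    · rw [min_eq_right h, min_eq_left h2]
      have := aux_H b a c hb ha hc
      rw [show (b:ℝ)*(a:ℝ) + (b:ℝ)*(c:ℝ) + (a:ℝ)*(c:ℝ)
          = (a:ℝ)*(b:ℝ) + (a:ℝ)*(c:ℝ) + (b:ℝ)*(c:ℝ) by ring] at this
      linarith [this]
    · rw [min_eq_right h, min_eq_right h2]
      have := aux_H c a b hc ha hb
      rw [show (c:ℝ)*(a:ℝ) + (c:ℝ)*(b:ℝ) + (a:ℝ)*(b:ℝ)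
          = (a:ℝ)*(b:ℝ) + (a:ℝ)*(c:ℝ) + (b:ℝ)*(c:ℝ) by ring] at this
      linarith [this]

/-- Factorization of a triple sum of a product. -/
lemma aux_sum3 (I : Finset ℕ) (f g h : ℕ → ℝ) :
    ∑ p ∈ I ×ˢ I ×ˢ I, f p.1 * (g p.2.1 * h p.2.2) =
    (∑ a ∈ I, f a) * ((∑ b ∈ I, g b) * (∑ c ∈ I, h c)) := by
  rw [Finset.sum_product]
  simp_rw [Finset.sum_product, ← Finset.mul_sum, ← Finset.sum_mul]

/-- The error term of order `min(m₀,m₁,m₂)^(-1/2)` in the Gaussian approximation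
contributes only `o(n²)` to the sum `A₂,₀`. -/
theorem sum_error_term_tendsto_zero :
    Tendsto
      (fun n : ℕ =>
        ((n : ℝ) ^ 2)⁻¹ *
          ∑ q ∈ (Finset.Icc 1 n ×ˢ Finset.Icc 1 n ×ˢ Finset.Icc 1 n ×ˢ Finset.Icc 1 n).filter
              (fun q : ℕ × ℕ × ℕ × ℕ => q.1 + q.2.1 + q.2.2.1 + q.2.2.2 ≤ n),
            ((min q.2.1 (min q.2.2.1 q.2.2.2) : ℕ) : ℝ) ^ (-(1/2 : ℝ))
              / (q.2.1 * q.2.2.1 + q.2.1 * q.2.2.2 + q.2.2.1 * q.2.2.2))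
      atTop (nhds 0) := by
  apply squeeze_zero (g := fun n : ℕ => 384 * (n:ℝ) ^ (-(1/4:ℝ)))
  · intro n
    apply mul_nonneg (by positivity)
    exact Finset.sum_nonneg fun q _ => by positivity
  · intro n
    rcases Nat.eq_zero_or_pos n with hn | hn
    · subst hn; simp
    · have hn0 : (0:ℝ) < (n:ℝ) := by exact_mod_cast hn
      set I := Finset.Icc 1 n with hI
      set u : ℕ → ℝ := fun m => (m:ℝ)^(-(1/2:ℝ)) with hu
      set v : ℕ → ℝ := fun m => (m:ℝ)^(-(7/8:ℝ)) with hv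
      set B : ℕ × ℕ × ℕ → ℝ := fun p =>
        u p.1 * (v p.2.1 * v p.2.2) + v p.1 * (u p.2.1 * v p.2.2)
          + v p.1 * (v p.2.1 * u p.2.2) with hB
      set U : ℝ := ∑ a ∈ I, u a with hUdef
      set V : ℝ := ∑ a ∈ I, v a with hVdef
      have hU0 : 0 ≤ U := Finset.sum_nonneg fun m _ => by positivity
      have hV0 : 0 ≤ V := Finset.sum_nonneg fun m _ => by positivity
      -- step 1 : drop the filter
      have step1 : ∑ q ∈ (I ×ˢ I ×ˢ I ×ˢ I).filter
              (fun q : ℕ × ℕ × ℕ × ℕ => q.1 + q.2.1 + q.2.2.1 + q.2.2.2 ≤ n),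
            ((min q.2.1 (min q.2.2.1 q.2.2.2) : ℕ) : ℝ) ^ (-(1/2 : ℝ))
              / (q.2.1 * q.2.2.1 + q.2.1 * q.2.2.2 + q.2.2.1 * q.2.2.2)
          ≤ ∑ q ∈ I ×ˢ I ×ˢ I ×ˢ I,
            ((min q.2.1 (min q.2.2.1 q.2.2.2) : ℕ) : ℝ) ^ (-(1/2 : ℝ))
              / (q.2.1 * q.2.2.1 + q.2.1 * q.2.2.2 + q.2.2.1 * q.2.2.2) :=
        Finset.sum_le_sum_of_subset_of_nonneg (Finset.filter_subset _ _)
          (fun q _ _ => by positivity)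
      -- step 2 : termwise bound
      have step2 : ∑ q ∈ I ×ˢ I ×ˢ I ×ˢ I,
            ((min q.2.1 (min q.2.2.1 q.2.2.2) : ℕ) : ℝ) ^ (-(1/2 : ℝ))
              / (q.2.1 * q.2.2.1 + q.2.1 * q.2.2.2 + q.2.2.1 * q.2.2.2)
          ≤ ∑ q ∈ I ×ˢ I ×ˢ I ×ˢ I, B q.2 := by
        apply Finset.sum_le_sum
        intro q hq
        simp only [hI, Finset.mem_product, Finset.mem_Icc] at hq
        have h := aux_term q.2.1 q.2.2.1 q.2.2.2 hq.2.1.1 hq.2.2.1.1 hq.2.2.2.1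
        have e : B q.2 = (q.2.1:ℝ)^(-(1/2:ℝ)) * ((q.2.2.1:ℝ)^(-(7/8:ℝ)) * (q.2.2.2:ℝ)^(-(7/8:ℝ)))
            + (q.2.2.1:ℝ)^(-(1/2:ℝ)) * ((q.2.1:ℝ)^(-(7/8:ℝ)) * (q.2.2.2:ℝ)^(-(7/8:ℝ)))
            + (q.2.2.2:ℝ)^(-(1/2:ℝ)) * ((q.2.1:ℝ)^(-(7/8:ℝ)) * (q.2.2.1:ℝ)^(-(7/8:ℝ))) := by
          simp only [hB, hu, hv]; ring
        rw [e]
        exact h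
      -- step 3 : sum over k₁ is just a factor n
      have step3 : ∑ q ∈ I ×ˢ I ×ˢ I ×ˢ I, B q.2
          = (n:ℝ) * ∑ p ∈ I ×ˢ I ×ˢ I, B p := by
        rw [Finset.sum_product]
        have e : ∀ x ∈ I, ∑ y ∈ I ×ˢ I ×ˢ I, B (x, y).2 = ∑ p ∈ I ×ˢ I ×ˢ I, B p :=
          fun x _ => rfl
        rw [Finset.sum_congr rfl e, Finset.sum_const, hI, Nat.card_Icc]
        simp [nsmul_eq_mul]
      -- step 4 : factor the triple sum
      have step4 : ∑ p ∈ I ×ˢ I ×ˢ I, B p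
          = U * (V * V) + V * (U * V) + V * (V * U) := by
        simp only [hB]
        rw [Finset.sum_add_distrib, Finset.sum_add_distrib,
          aux_sum3 I u v v, aux_sum3 I v u v, aux_sum3 I v v u]
      -- bounds on the one-dimensional sums
      have hU : U ≤ 2 * (n:ℝ)^((1:ℝ)/2) := by
        have h := aux_sum_rpow_neg_le (1/2) (by norm_num) (by norm_num) n
        simp only [hUdef, hI, hu]
        calc ∑ m ∈ Finset.Icc 1 n, (m:ℝ)^(-(1/2:ℝ)) ≤ (n:ℝ)^((1:ℝ)-1/2)/(1-1/2) := h
          _ = 2 * (n:ℝ)^((1:ℝ)/2) := by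
            rw [show (1:ℝ)-1/2 = 1/2 by norm_num]; ring
      have hV : V ≤ 8 * (n:ℝ)^((1:ℝ)/8) := by
        have h := aux_sum_rpow_neg_le (7/8) (by norm_num) (by norm_num) n
        simp only [hVdef, hI, hv]
        calc ∑ m ∈ Finset.Icc 1 n, (m:ℝ)^(-(7/8:ℝ)) ≤ (n:ℝ)^((1:ℝ)-7/8)/(1-7/8) := h
          _ = 8 * (n:ℝ)^((1:ℝ)/8) := by
            rw [show (1:ℝ)-7/8 = 1/8 by norm_num]; ring
      set W : ℝ := 2 * (n:ℝ)^((1:ℝ)/2) with hW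
      set X : ℝ := 8 * (n:ℝ)^((1:ℝ)/8) with hX
      have hW0 : 0 ≤ W := by positivity
      have hX0 : 0 ≤ X := by positivity
      have g1 : U * (V * V) ≤ W * (X * X) :=
        mul_le_mul hU (mul_le_mul hV hV hV0 hX0) (mul_nonneg hV0 hV0) hW0
      have g2 : V * (U * V) ≤ X * (W * X) :=
        mul_le_mul hV (mul_le_mul hU hV hV0 hW0) (mul_nonneg hU0 hV0) hX0
      have g3 : V * (V * U) ≤ X * (X * W) :=
        mul_le_mul hV (mul_le_mul hV hU hU0 hX0) (mul_nonneg hV0 hU0) hX0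
      have hWXX : W * (X * X) = 128 * (n:ℝ)^((3:ℝ)/4) := by
        have e1 : (n:ℝ)^((1:ℝ)/2) * ((n:ℝ)^((1:ℝ)/8) * (n:ℝ)^((1:ℝ)/8))
            = (n:ℝ)^((3:ℝ)/4) := by
          rw [← Real.rpow_add hn0, ← Real.rpow_add hn0]; norm_num
        calc W * (X * X)
            = 128 * ((n:ℝ)^((1:ℝ)/2) * ((n:ℝ)^((1:ℝ)/8) * (n:ℝ)^((1:ℝ)/8))) := by
              rw [hW, hX]; ring
          _ = 128 * (n:ℝ)^((3:ℝ)/4) := by rw [e1]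
      have hT : ∑ p ∈ I ×ˢ I ×ˢ I, B p ≤ 3 * (128 * (n:ℝ)^((3:ℝ)/4)) := by
        have : X * (W * X) = W * (X * X) := by ring
        have h2 : X * (X * W) = W * (X * X) := by ring
        rw [step4]
        calc U * (V * V) + V * (U * V) + V * (V * U)
            ≤ W * (X * X) + X * (W * X) + X * (X * W) := by linarith
          _ = 3 * (W * (X * X)) := by ring
          _ = 3 * (128 * (n:ℝ)^((3:ℝ)/4)) := by rw [hWXX]
      -- assemble
      have hS : ∑ q ∈ (I ×ˢ I ×ˢ I ×ˢ I).filter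
              (fun q : ℕ × ℕ × ℕ × ℕ => q.1 + q.2.1 + q.2.2.1 + q.2.2.2 ≤ n),
            ((min q.2.1 (min q.2.2.1 q.2.2.2) : ℕ) : ℝ) ^ (-(1/2 : ℝ))
              / (q.2.1 * q.2.2.1 + q.2.1 * q.2.2.2 + q.2.2.1 * q.2.2.2)
          ≤ (n:ℝ) * (3 * (128 * (n:ℝ)^((3:ℝ)/4))) := by
        calc _ ≤ ∑ q ∈ I ×ˢ I ×ˢ I ×ˢ I,
            ((min q.2.1 (min q.2.2.1 q.2.2.2) : ℕ) : ℝ) ^ (-(1/2 : ℝ))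
              / (q.2.1 * q.2.2.1 + q.2.1 * q.2.2.2 + q.2.2.1 * q.2.2.2) := step1
          _ ≤ ∑ q ∈ I ×ˢ I ×ˢ I ×ˢ I, B q.2 := step2
          _ = (n:ℝ) * ∑ p ∈ I ×ˢ I ×ˢ I, B p := step3
          _ ≤ (n:ℝ) * (3 * (128 * (n:ℝ)^((3:ℝ)/4))) :=
              mul_le_mul_of_nonneg_left hT hn0.le
      have efin : ((n:ℝ)^2)⁻¹ * ((n:ℝ) * (3 * (128 * (n:ℝ)^((3:ℝ)/4))))
          = 384 * (n:ℝ)^(-(1/4:ℝ)) := by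
        have e : (n:ℝ)^((3:ℝ)/4) = (n:ℝ)^(-(1/4:ℝ)) * (n:ℝ) := by
          rw [show (3:ℝ)/4 = -(1/4) + 1 by norm_num, Real.rpow_add hn0, Real.rpow_one]
        rw [e]
        field_simp
        ring
      calc ((n:ℝ)^2)⁻¹ * ∑ q ∈ (I ×ˢ I ×ˢ I ×ˢ I).filter
              (fun q : ℕ × ℕ × ℕ × ℕ => q.1 + q.2.1 + q.2.2.1 + q.2.2.2 ≤ n),
            ((min q.2.1 (min q.2.2.1 q.2.2.2) : ℕ) : ℝ) ^ (-(1/2 : ℝ))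
              / (q.2.1 * q.2.2.1 + q.2.1 * q.2.2.2 + q.2.2.1 * q.2.2.2)
          ≤ ((n:ℝ)^2)⁻¹ * ((n:ℝ) * (3 * (128 * (n:ℝ)^((3:ℝ)/4)))) :=
            mul_le_mul_of_nonneg_left hS (by positivity)
        _ = 384 * (n:ℝ)^(-(1/4:ℝ)) := efin
  · have h := (tendsto_rpow_neg_atTop (by norm_num : (0:ℝ) < 1/4)).comp
      (tendsto_natCast_atTop_atTop (R := ℝ))
    simpa using h.const_mul 384
end

section
/- One has ∫_{1/2}^{1} ((1 − u)²/u) · log(u/(1 − u)) du = π²/12 + 1/4 − (3/2)·log 2. -/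
/-!
Since `(1 - u)² / u = 1 / u - 2 + u`, the integral splits as `∫ ℓ(u) / u + ∫ (u - 2) ℓ(u)` with
`ℓ(u) = log u - log (1 - u)`. The second part has an elementary primitive. The substitution
`u = 1 / (1 + v)` turns the first into `-∫₀¹ log v / (1 + v) dv`; expanding `1 / (1 + v)` as a
geometric series and using `∫₀¹ vⁿ log v = -1 / (n + 1)²` gives `∑ (-1)ⁿ / (n + 1)² = π² / 12`.
Summation and integration may be exchanged because `∑ ∫₀¹ |vⁿ log v| = ζ(2)` is finite.
-/

open Real Set MeasureTheory intervalIntegral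

theorem hasSum_inv_succ_sq : HasSum (fun n : ℕ => 1 / ((n : ℝ) + 1) ^ 2) (π ^ 2 / 6) := by
  simpa using (hasSum_nat_add_iff' 1).mpr hasSum_zeta_two

theorem hasSum_neg_one_pow_div_succ_sq :
    HasSum (fun n : ℕ => (-1) ^ n / ((n : ℝ) + 1) ^ 2) (π ^ 2 / 12) := by
  set g : ℕ → ℝ := fun n => 1 / ((n : ℝ) + 1) ^ 2
  have hodd : HasSum (fun k => g (2 * k + 1)) (π ^ 2 / 24) := by
    have hk : (fun k => g (2 * k + 1)) = fun k => g k / 4 := by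
      ext k
      simp only [g]
      push_cast
      field_simp
      ring
    rw [hk, show π ^ 2 / 24 = π ^ 2 / 6 / 4 by ring]
    exact hasSum_inv_succ_sq.div_const 4
  have heven : HasSum (fun k => g (2 * k)) (π ^ 2 / 8) := by
    obtain ⟨a, ha⟩ : Summable fun k => g (2 * k) :=
      hasSum_inv_succ_sq.summable.comp_injective (mul_right_injective₀ two_ne_zero)
    have := (ha.even_add_odd hodd).unique hasSum_inv_succ_sq
    rwa [show π ^ 2 / 8 = a by linarith]
  rw [show π ^ 2 / 12 = π ^ 2 / 8 + -(π ^ 2 / 24) by ring]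
  refine HasSum.even_add_odd ?_ ?_
  · exact heven.congr_fun fun k => by simp [g, pow_mul]
  · exact hodd.neg.congr_fun fun k => by simp [g, pow_succ, pow_mul, neg_div]

theorem integral_pow_mul_log (n : ℕ) :
    ∫ v in (0 : ℝ)..1, v ^ n * log v = -1 / ((n : ℝ) + 1) ^ 2 := by
  have hn : (n : ℝ) + 1 ≠ 0 := by positivity
  set F : ℝ → ℝ := fun v => v ^ (n + 1) * log v / (n + 1) - v ^ (n + 1) / (n + 1) ^ 2
  have hderiv : ∀ v ∈ Ioo (0 : ℝ) 1, HasDerivAt F (v ^ n * log v) v := by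
    intro v hv
    have hv0 : v ≠ 0 := hv.1.ne'
    refine ((((hasDerivAt_pow (n + 1) v).mul (hasDerivAt_log hv0)).div_const _).sub
      ((hasDerivAt_pow (n + 1) v).div_const _)).congr_deriv ?_
    push_cast [Nat.add_sub_cancel]
    field_simp
    ring
  have hcont : ContinuousOn F (Icc 0 1) := by
    have hF : F = fun v => v ^ n * (v * log v) / (n + 1) - v ^ (n + 1) / (n + 1) ^ 2 := by
      ext v
      ring
    rw [hF]
    fun_prop
  rw [integral_eq_sub_of_hasDerivAt_of_le zero_le_one hcont hderiv
    (intervalIntegrable_log'.continuousOn_mul (continuous_pow n).continuousOn)]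
  simp [F]
  field_simp

theorem hasSum_log_div_one_add {v : ℝ} (h₀ : -1 < v) (h₁ : v ≤ 1) :
    HasSum (fun n : ℕ => (-1) ^ n * (v ^ n * log v)) (log v / (1 + v)) := by
  rcases h₁.lt_or_eq with h₁ | rfl
  · have := (hasSum_geometric_of_abs_lt_one (r := -v)
      (abs_lt.2 ⟨by linarith, by linarith⟩)).mul_right (log v)
    rw [sub_neg_eq_add, ← div_eq_inv_mul] at this
    exact this.congr_fun fun n => by rw [neg_pow]; ring
  · simp [hasSum_zero]

theorem integral_log_div_one_add : ∫ v in (0 : ℝ)..1, log v / (1 + v) = -(π ^ 2 / 12) := by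
  set F : ℕ → ℝ → ℝ := fun n v => (-1) ^ n * (v ^ n * log v)
  have hF_int (n : ℕ) : IntegrableOn (F n) (Ioc 0 1) :=
    ((intervalIntegrable_log'.continuousOn_mul (continuous_pow n).continuousOn).const_mul _).1
  have hF_norm (n : ℕ) : ∫ v in Ioc 0 1, ‖F n v‖ = 1 / ((n : ℝ) + 1) ^ 2 := by
    rw [setIntegral_congr_fun measurableSet_Ioc (g := fun v => -(v ^ n * log v)),
      ← integral_of_le zero_le_one, intervalIntegral.integral_neg, integral_pow_mul_log]
    · ring
    · intro v hv
      simp [F, abs_of_pos hv.1, abs_of_nonpos (log_nonpos hv.1.le hv.2)]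
  have hsum := hasSum_integral_of_summable_integral_norm hF_int
    (by simpa only [hF_norm] using hasSum_inv_succ_sq.summable)
  rw [integral_of_le zero_le_one, ← setIntegral_congr_fun measurableSet_Ioc
    fun v hv => (hasSum_log_div_one_add (by linarith [hv.1]) hv.2).tsum_eq]
  refine hsum.unique (hasSum_neg_one_pow_div_succ_sq.neg.congr_fun fun n => ?_)
  rw [← integral_of_le zero_le_one, intervalIntegral.integral_const_mul, integral_pow_mul_log]
  ring

theorem intervalIntegrable_log_sub_log_one_sub (a b : ℝ) :
    IntervalIntegrable (fun u => log u - log (1 - u)) volume a b :=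
  intervalIntegrable_log'.sub <| by
    simpa using (intervalIntegrable_log' (a := 1 - a) (b := 1 - b)).comp_sub_left 1

theorem intervalIntegrable_log_sub_log_one_sub_div {a b : ℝ} (h : (0 : ℝ) ∉ uIcc a b) :
    IntervalIntegrable (fun u => (log u - log (1 - u)) / u) volume a b := by
  simpa only [div_eq_mul_inv] using (intervalIntegrable_log_sub_log_one_sub a b).mul_continuousOn
    (continuousOn_inv₀.mono fun u hu (h0 : u = 0) => h (h0 ▸ hu))

theorem log_sub_log_one_sub_div_inv_one_add {v : ℝ} (hv : 0 ≤ v) :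
    (log (1 + v)⁻¹ - log (1 - (1 + v)⁻¹)) / (1 + v)⁻¹ * (-1 / (1 + v) ^ 2) = log v / (1 + v) := by
  have hlogit : log (1 + v)⁻¹ - log (1 - (1 + v)⁻¹) = -log v := by
    rcases hv.eq_or_lt with rfl | hv
    · simp
    · rw [show 1 - (1 + v)⁻¹ = v * (1 + v)⁻¹ by field_simp; ring, log_mul hv.ne' (by positivity)]
      ring
  have : 1 + v ≠ 0 := by linarith
  rw [hlogit]
  field_simp

theorem integral_log_sub_log_one_sub_div :
    ∫ u in (1 / 2 : ℝ)..1, (log u - log (1 - u)) / u = π ^ 2 / 12 := by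
  set g : ℝ → ℝ := fun u => (log u - log (1 - u)) / u
  have hsubst : EqOn (fun v => (g ∘ fun v => (1 + v)⁻¹) v * (-1 / (1 + v) ^ 2))
      (fun v => log v / (1 + v)) (uIcc 0 1) := fun v hv =>
    log_sub_log_one_sub_div_inv_one_add (by rw [uIcc_of_le zero_le_one] at hv; exact hv.1)
  have hg : IntegrableOn g (Icc (1 / 2) 1) := by
    rw [← intervalIntegrable_iff_integrableOn_Icc_of_le (by norm_num)]
    exact intervalIntegrable_log_sub_log_one_sub_div (by rw [uIcc_of_le (by norm_num)]; norm_num)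
  have hf : ContinuousOn (fun v : ℝ => (1 + v)⁻¹) (uIcc 0 1) := by
    refine ContinuousOn.inv₀ (by fun_prop) fun v hv => ?_
    rw [uIcc_of_le zero_le_one] at hv
    exact (show (0 : ℝ) < 1 + v by linarith [hv.1]).ne'
  have hcov := integral_comp_mul_deriv''' (f' := fun v => -1 / (1 + v) ^ 2) (g := g) hf ?_ ?_ ?_ ?_
  · rw [integral_congr hsubst, integral_log_div_one_add, integral_symm] at hcov
    norm_num at hcov
    linarith
  · rw [min_eq_left zero_le_one, max_eq_right zero_le_one]
    intro v hv
    exact (((hasDerivAt_id' v).const_add 1).inv (by linarith [hv.1])).hasDerivWithinAt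
  · rw [min_eq_left zero_le_one, max_eq_right zero_le_one]
    refine ContinuousOn.mono (s := Ioo 0 1) (fun u hu => ContinuousAt.continuousWithinAt ?_) ?_
    · have := hu.1
      have := hu.2
      simp only [g]
      fun_prop (disch := simp; linarith)
    · rintro _ ⟨v, hv, rfl⟩
      exact ⟨by have := hv.1; positivity, inv_lt_one_of_one_lt₀ (by linarith [hv.1])⟩
  · refine hg.mono_set ?_
    rintro _ ⟨v, hv, rfl⟩
    rw [uIcc_of_le zero_le_one] at hv
    refine ⟨?_, inv_le_one_of_one_le₀ (by linarith [hv.1])⟩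
    rw [one_div]
    exact inv_anti₀ (by linarith [hv.1]) (by linarith [hv.2])
  · refine IntegrableOn.congr_fun ?_ hsubst.symm measurableSet_uIcc
    rw [uIcc_of_le zero_le_one, ← intervalIntegrable_iff_integrableOn_Icc_of_le zero_le_one]
    simpa only [div_eq_mul_inv] using intervalIntegrable_log'.mul_continuousOn hf

theorem integral_sub_two_mul_log_sub_log_one_sub :
    ∫ u in (1 / 2 : ℝ)..1, (u - 2) * (log u - log (1 - u)) = 1 / 4 - 3 / 2 * log 2 := by
  set G : ℝ → ℝ := fun u =>
    (u ^ 2 / 2 - 2 * u) * log u - (3 - u) / 2 * ((1 - u) * log (1 - u)) + u / 2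
  have hderiv : ∀ u ∈ Ioo (1 / 2 : ℝ) 1,
      HasDerivAt G ((u - 2) * (log u - log (1 - u))) u := by
    intro u hu
    have hu₀ : u ≠ 0 := by linarith [hu.1]
    have hu₁ : 1 - u ≠ 0 := by linarith [hu.2]
    have h₁ := ((hasDerivAt_pow 2 u).div_const 2).sub ((hasDerivAt_id' u).const_mul 2)
    have h₂ := ((hasDerivAt_id' u).const_sub 3).div_const 2
    have h₃ := (hasDerivAt_mul_log hu₁).comp u ((hasDerivAt_id' u).const_sub 1)
    refine (((h₁.mul (hasDerivAt_log hu₀)).sub (h₂.mul h₃)).add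
      ((hasDerivAt_id' u).div_const 2)).congr_deriv ?_
    simp only [Pi.sub_apply, Function.comp_apply]
    field_simp
    ring
  have hcont : ContinuousOn G (Icc (1 / 2) 1) := by
    have : ContinuousOn log (Icc (1 / 2 : ℝ) 1) :=
      continuousOn_log.mono fun u hu (h0 : u = 0) => by linarith [h0 ▸ hu.1]
    have : Continuous fun u : ℝ => (1 - u) * log (1 - u) :=
      continuous_mul_log.comp (continuous_sub_left 1)
    fun_prop
  rw [integral_eq_sub_of_hasDerivAt_of_le (by norm_num) hcont hderiv
    ((intervalIntegrable_log_sub_log_one_sub _ _).continuousOn_mul (by fun_prop))]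
  have hlog : log (1 / 2 : ℝ) = -log 2 := by rw [one_div, log_inv]
  norm_num [G, hlog]
  ring

/-- Evaluation of the definite integral `I`:
`∫_{1/2}^{1} ((1 − u)²/u) log(u/(1 − u)) du = π²/12 + 1/4 − (3/2) log 2`. -/
theorem integral_I_value :
    ∫ u in (1/2 : ℝ)..1, ((1 - u) ^ 2 / u) * Real.log (u / (1 - u))
      = Real.pi ^ 2 / 12 + 1/4 - (3/2) * Real.log 2 := by
  have hsplit : EqOn (fun u : ℝ => (1 - u) ^ 2 / u * log (u / (1 - u)))
      (fun u => (log u - log (1 - u)) / u + (u - 2) * (log u - log (1 - u))) (uIcc (1 / 2) 1) := by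
    intro u hu
    rw [uIcc_of_le (by norm_num)] at hu
    have hu₀ : u ≠ 0 := by linarith [hu.1]
    rcases hu.2.lt_or_eq with hu₁ | rfl
    · beta_reduce
      rw [log_div hu₀ (sub_ne_zero.2 hu₁.ne')]
      field_simp
      ring
    · simp -- at `u = 1` both sides vanish because `log 0 = 0`
  have hzero : (0 : ℝ) ∉ uIcc (1 / 2) 1 := by rw [uIcc_of_le (by norm_num)]; norm_num
  rw [integral_congr hsplit,
    integral_add (intervalIntegrable_log_sub_log_one_sub_div hzero)
      ((intervalIntegrable_log_sub_log_one_sub _ _).continuousOn_mul (by fun_prop)),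
    integral_log_sub_log_one_sub_div, integral_sub_two_mul_log_sub_log_one_sub]
  ring
end

section
/- One has lim_{n→∞} n^{−2} · ∑_{1 ≤ k₁ < k₂ < ℓ₂ ≤ ℓ₁ ≤ n} 1/((ℓ₁ − k₁)·((ℓ₁ − k₁) − (ℓ₂ − k₂))) = 1/2, the sum ranging over quadruples of integers with 1 ≤ k₁ < k₂ < ℓ₂ ≤ ℓ₁ ≤ n (note that these constraints force ℓ₁ − k₁ > ℓ₂ − k₂, so every denominator is a positive integer). -/
open Filter Finset

lemma step1 (n : ℕ) :
    (∑ q ∈ (Finset.Icc 1 n ×ˢ Finset.Icc 1 n ×ˢ Finset.Icc 1 n ×ˢ Finset.Icc 1 n).filter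
        (fun q : ℕ × ℕ × ℕ × ℕ => q.1 < q.2.1 ∧ q.2.1 < q.2.2.1 ∧ q.2.2.1 ≤ q.2.2.2),
      (1 : ℝ) / (((q.2.2.2 : ℝ) - q.1)
        * (((q.2.2.2 : ℝ) - q.1) - ((q.2.2.1 : ℝ) - q.2.1))))
    = ∑ p ∈ (Finset.Icc 1 n ×ˢ Finset.Icc 1 n ×ˢ Finset.Icc 1 n ×ˢ Finset.Icc 1 n).filter
        (fun p : ℕ × ℕ × ℕ × ℕ => p.1 + p.2.2.1 < p.2.1 ∧ p.2.2.2 ≤ p.2.2.1),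
      (1 : ℝ) / (((p.2.1 : ℝ) - p.1) * p.2.2.1) := by
  refine Finset.sum_nbij'
    (fun q => (q.1, q.2.2.2, q.2.2.2 + q.2.1 - (q.2.2.1 + q.1), q.2.1 - q.1))
    (fun p => (p.1, p.1 + p.2.2.2, p.2.1 + p.2.2.2 - p.2.2.1, p.2.1)) ?_ ?_ ?_ ?_ ?_
  · rintro ⟨k1, k2, l2, l1⟩ hq
    simp only [Finset.mem_filter, Finset.mem_product, Finset.mem_Icc] at hq ⊢
    omega
  · rintro ⟨k, l, d, i⟩ hp
    simp only [Finset.mem_filter, Finset.mem_product, Finset.mem_Icc] at hp ⊢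
    omega
  · rintro ⟨k1, k2, l2, l1⟩ hq
    simp only [Finset.mem_filter, Finset.mem_product, Finset.mem_Icc] at hq
    simp only [Prod.mk.injEq, and_true, true_and]
    omega
  · rintro ⟨k, l, d, i⟩ hp
    simp only [Finset.mem_filter, Finset.mem_product, Finset.mem_Icc] at hp
    simp only [Prod.mk.injEq, and_true, true_and]
    omega
  · rintro ⟨k1, k2, l2, l1⟩ hq
    simp only [Finset.mem_filter, Finset.mem_product, Finset.mem_Icc] at hq
    have h : l2 + k1 ≤ l1 + k2 := by omega
    simp only
    rw [Nat.cast_sub h]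
    push_cast
    ring_nf

lemma sum_prod_filter {α β : Type*} (s : Finset α) (t : Finset β)
    (P : α × β → Prop) [DecidablePred P] (f : α × β → ℝ) :
    ∑ p ∈ (s ×ˢ t).filter P, f p
      = ∑ x ∈ s, ∑ y ∈ t.filter (fun y => P (x, y)), f (x, y) := by
  rw [Finset.sum_filter, Finset.sum_product]
  simp [Finset.sum_filter]

lemma step2 (n : ℕ) :
    ∑ p ∈ (Finset.Icc 1 n ×ˢ Finset.Icc 1 n ×ˢ Finset.Icc 1 n ×ˢ Finset.Icc 1 n).filter
        (fun p : ℕ × ℕ × ℕ × ℕ => p.1 + p.2.2.1 < p.2.1 ∧ p.2.2.2 ≤ p.2.2.1),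
      (1 : ℝ) / (((p.2.1 : ℝ) - p.1) * p.2.2.1)
    = ∑ k ∈ Finset.Icc 1 n, ∑ l ∈ Finset.Icc 1 n,
        ((l - k - 1 : ℕ) : ℝ) * (1 / ((l : ℝ) - k)) := by
  rw [sum_prod_filter]
  refine Finset.sum_congr rfl fun k hk => ?_
  rw [sum_prod_filter]
  refine Finset.sum_congr rfl fun l hl => ?_
  rw [sum_prod_filter]
  simp only [Finset.mem_Icc] at hk hl
  -- inner two sums over d and i
  have key : ∀ d ∈ Finset.Icc 1 n,
      (∑ i ∈ (Finset.Icc 1 n).filter (fun i => k + d < l ∧ i ≤ d),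
        (1 : ℝ) / (((l : ℝ) - k) * d))
      = (if k + d < l then (1:ℝ) / ((l:ℝ) - k) else 0) := by
    intro d hd
    simp only [Finset.mem_Icc] at hd
    by_cases h : k + d < l
    · have hset : (Finset.Icc 1 n).filter (fun i => k + d < l ∧ i ≤ d)
          = Finset.Icc 1 d := by
        ext i; simp only [Finset.mem_filter, Finset.mem_Icc]; omega
      rw [hset, Finset.sum_const, Nat.card_Icc, if_pos h]
      have hd0 : (d : ℝ) ≠ 0 := Nat.cast_ne_zero.mpr (by omega)
      have hlk : ((l : ℝ) - k) ≠ 0 := by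
        have : (k : ℝ) < l := by exact_mod_cast Nat.lt_of_le_of_lt (Nat.le_add_right k d) h
        linarith
      simp only [Nat.add_sub_cancel, nsmul_eq_mul]
      field_simp
    · have hset : (Finset.Icc 1 n).filter (fun i => k + d < l ∧ i ≤ d) = ∅ :=
        Finset.filter_false_of_mem (fun i _ hi => h hi.1)
      rw [hset, if_neg h]; simp
  rw [Finset.sum_congr rfl key]
  -- now sum over d of indicator
  rw [← Finset.sum_filter]
  have hset : (Finset.Icc 1 n).filter (fun d => k + d < l) = Finset.Icc 1 (l - k - 1) := by
    ext d; simp only [Finset.mem_filter, Finset.mem_Icc]; omega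
  rw [hset, Finset.sum_const, Nat.card_Icc, nsmul_eq_mul]
  norm_num

lemma sum_prod_filter' {α β : Type*} (s : Finset α) (t : Finset β)
    (P : α × β → Prop) [DecidablePred P] (f : α × β → ℝ) :
    ∑ p ∈ (s ×ˢ t).filter P, f p
      = ∑ x ∈ s, ∑ y ∈ t.filter (fun y => P (x, y)), f (x, y) := by
  rw [Finset.sum_filter, Finset.sum_product]
  simp [Finset.sum_filter]

lemma step3 (n : ℕ) :
    ∑ k ∈ Finset.Icc 1 n, ∑ l ∈ Finset.Icc 1 n,
        ((l - k - 1 : ℕ) : ℝ) * (1 / ((l : ℝ) - k))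
    = ∑ m ∈ Finset.Icc 1 n, ((n - m : ℕ) : ℝ) * (((m - 1 : ℕ) : ℝ) * (1 / (m : ℝ))) := by
  rw [← Finset.sum_product']
  have h1 : ∑ p ∈ Finset.Icc 1 n ×ˢ Finset.Icc 1 n,
      ((p.2 - p.1 - 1 : ℕ) : ℝ) * (1 / ((p.2 : ℝ) - p.1))
      = ∑ p ∈ (Finset.Icc 1 n ×ˢ Finset.Icc 1 n).filter (fun p => p.1 < p.2),
        ((p.2 - p.1 - 1 : ℕ) : ℝ) * (1 / ((p.2 : ℝ) - p.1)) := by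
    refine (Finset.sum_filter_of_ne fun p hp hne => ?_).symm
    by_contra h
    exact hne (by simp [Nat.sub_eq_zero_of_le, Nat.sub_le_iff_le_add.mpr, show p.2 - p.1 - 1 = 0 by omega])
  rw [h1]
  have h2 : ∑ p ∈ (Finset.Icc 1 n ×ˢ Finset.Icc 1 n).filter (fun p => p.1 < p.2),
      ((p.2 - p.1 - 1 : ℕ) : ℝ) * (1 / ((p.2 : ℝ) - p.1))
      = ∑ p ∈ (Finset.Icc 1 n ×ˢ Finset.Icc 1 n).filter (fun p : ℕ × ℕ => p.1 + p.2 ≤ n),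
        ((p.1 - 1 : ℕ) : ℝ) * (1 / (p.1 : ℝ)) := by
    refine Finset.sum_nbij' (fun p => (p.2 - p.1, p.1)) (fun p => (p.2, p.2 + p.1)) ?_ ?_ ?_ ?_ ?_
    · rintro ⟨k, l⟩ hp
      simp only [Finset.mem_filter, Finset.mem_product, Finset.mem_Icc] at hp ⊢
      omega
    · rintro ⟨m, k⟩ hp
      simp only [Finset.mem_filter, Finset.mem_product, Finset.mem_Icc] at hp ⊢
      omega
    · rintro ⟨k, l⟩ hp
      simp only [Finset.mem_filter, Finset.mem_product, Finset.mem_Icc] at hp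
      simp only [Prod.mk.injEq, and_true, true_and]
      omega
    · rintro ⟨m, k⟩ hp
      simp only [Finset.mem_filter, Finset.mem_product, Finset.mem_Icc] at hp
      simp only [Prod.mk.injEq, and_true, true_and]
      omega
    · rintro ⟨k, l⟩ hp
      simp only [Finset.mem_filter, Finset.mem_product, Finset.mem_Icc] at hp
      have hkl : k ≤ l := le_of_lt hp.2
      simp only
      rw [Nat.cast_sub hkl]
  rw [h2, sum_prod_filter']
  refine Finset.sum_congr rfl fun m hm => ?_
  simp only [Finset.mem_Icc] at hm
  have hset : (Finset.Icc 1 n).filter (fun k => m + k ≤ n) = Finset.Icc 1 (n - m) := by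
    ext k; simp only [Finset.mem_filter, Finset.mem_Icc]; omega
  rw [hset]
  simp only
  rw [Finset.sum_const, Nat.card_Icc, nsmul_eq_mul]
  norm_num

lemma Tsum_eq (n : ℕ) :
    ∑ m ∈ Finset.Icc 1 n, ((n - m : ℕ) : ℝ) * (((m - 1 : ℕ) : ℝ) * (1 / (m : ℝ)))
    = (∑ m ∈ Finset.Icc 1 n, ((n - m : ℕ) : ℝ))
      - ∑ m ∈ Finset.Icc 1 n, ((n - m : ℕ) : ℝ) * (m : ℝ)⁻¹ := by
  rw [← Finset.sum_sub_distrib]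
  refine Finset.sum_congr rfl fun m hm => ?_
  simp only [Finset.mem_Icc] at hm
  have hm0 : (m : ℝ) ≠ 0 := Nat.cast_ne_zero.mpr (by omega)
  have : ((m - 1 : ℕ) : ℝ) = (m : ℝ) - 1 := by
    rw [Nat.cast_sub hm.1]; norm_num
  rw [this]
  field_simp

lemma A_eq (n : ℕ) :
    (∑ m ∈ Finset.Icc 1 n, ((n - m : ℕ) : ℝ)) * 2 = (n : ℝ) * ((n - 1 : ℕ) : ℝ) := by
  have key0 : (∑ m ∈ Finset.Icc 1 n, (n - m)) = ∑ j ∈ Finset.range n, j := by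
    refine Finset.sum_nbij' (fun m => n - m) (fun j => n - j) ?_ ?_ ?_ ?_ ?_ <;>
      (intro a ha; simp only [Finset.mem_Icc, Finset.mem_range] at *) <;> omega
  have key : (∑ m ∈ Finset.Icc 1 n, (n - m)) * 2 = n * (n - 1) := by
    rw [key0]; exact Finset.sum_range_id_mul_two n
  calc (∑ m ∈ Finset.Icc 1 n, ((n - m : ℕ) : ℝ)) * 2
      = (((∑ m ∈ Finset.Icc 1 n, (n - m)) * 2 : ℕ) : ℝ) := by push_cast; ring
    _ = ((n * (n - 1) : ℕ) : ℝ) := by rw [key]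
    _ = (n : ℝ) * ((n - 1 : ℕ) : ℝ) := by push_cast [Nat.cast_mul]; ring

lemma B_bound (n : ℕ) :
    ∑ m ∈ Finset.Icc 1 n, ((n - m : ℕ) : ℝ) * (m : ℝ)⁻¹ ≤ (n : ℝ) * (1 + Real.log n) := by
  have h1 : ∑ m ∈ Finset.Icc 1 n, ((n - m : ℕ) : ℝ) * (m : ℝ)⁻¹
      ≤ ∑ m ∈ Finset.Icc 1 n, (n : ℝ) * (m : ℝ)⁻¹ := by
    refine Finset.sum_le_sum fun m hm => ?_
    have : ((n - m : ℕ) : ℝ) ≤ (n : ℝ) := Nat.cast_le.mpr (Nat.sub_le n m)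
    exact mul_le_mul_of_nonneg_right this (by positivity)
  refine h1.trans ?_
  rw [← Finset.mul_sum]
  have h2 : ∑ m ∈ Finset.Icc 1 n, (m : ℝ)⁻¹ = ((harmonic n : ℚ) : ℝ) := by
    rw [harmonic_eq_sum_Icc]; push_cast; rfl
  rw [h2]
  exact mul_le_mul_of_nonneg_left (harmonic_le_one_add_log n) (Nat.cast_nonneg n)

lemma B_nonneg (n : ℕ) :
    0 ≤ ∑ m ∈ Finset.Icc 1 n, ((n - m : ℕ) : ℝ) * (m : ℝ)⁻¹ :=
  Finset.sum_nonneg fun m _ => by positivity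

lemma step4 :
    Tendsto (fun n : ℕ => ((n : ℝ) ^ 2)⁻¹ *
      ∑ m ∈ Finset.Icc 1 n, ((n - m : ℕ) : ℝ) * (((m - 1 : ℕ) : ℝ) * (1 / (m : ℝ))))
      atTop (nhds (1/2)) := by
  have hA : Tendsto (fun n : ℕ => ((n : ℝ) ^ 2)⁻¹ *
      ∑ m ∈ Finset.Icc 1 n, ((n - m : ℕ) : ℝ)) atTop (nhds (1/2)) := by
    have heq : ∀ᶠ n : ℕ in atTop, ((n : ℝ) ^ 2)⁻¹ *
        ∑ m ∈ Finset.Icc 1 n, ((n - m : ℕ) : ℝ) = (1 - (n : ℝ)⁻¹) / 2 := by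
      filter_upwards [eventually_ge_atTop 1] with n hn
      have hn0 : (n : ℝ) ≠ 0 := Nat.cast_ne_zero.mpr (by omega)
      have h := A_eq n
      have hcast : ((n - 1 : ℕ) : ℝ) = (n : ℝ) - 1 := by
        rw [Nat.cast_sub hn]; norm_num
      rw [hcast] at h
      have : ∑ m ∈ Finset.Icc 1 n, ((n - m : ℕ) : ℝ) = (n : ℝ) * ((n : ℝ) - 1) / 2 := by
        linarith
      rw [this]
      field_simp
    refine Tendsto.congr' (Filter.EventuallyEq.symm heq) ?_
    have hnat : Tendsto (fun n : ℕ => (n : ℝ)) atTop atTop := tendsto_natCast_atTop_atTop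
    have h1 : Tendsto (fun n : ℕ => ((n : ℝ))⁻¹) atTop (nhds 0) :=
      tendsto_inv_atTop_zero.comp hnat
    have h2 : Tendsto (fun n : ℕ => 1 - (n : ℝ)⁻¹) atTop (nhds 1) := by
      simpa using (tendsto_const_nhds (x := (1:ℝ)) (f := atTop)).sub h1
    have h3 : Tendsto (fun n : ℕ => (1 - (n : ℝ)⁻¹) / 2) atTop (nhds (1 / 2)) :=
      h2.div_const 2
    exact h3
  have hB : Tendsto (fun n : ℕ => ((n : ℝ) ^ 2)⁻¹ *
      ∑ m ∈ Finset.Icc 1 n, ((n - m : ℕ) : ℝ) * (m : ℝ)⁻¹) atTop (nhds 0) := by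
    have hub : Tendsto (fun n : ℕ => ((n : ℝ))⁻¹ + Real.log n / n) atTop (nhds 0) := by
      have hnat : Tendsto (fun n : ℕ => (n : ℝ)) atTop atTop := tendsto_natCast_atTop_atTop
      have h1 : Tendsto (fun n : ℕ => ((n : ℝ))⁻¹) atTop (nhds 0) :=
        tendsto_inv_atTop_zero.comp hnat
      have h2 : Tendsto (fun x : ℝ => Real.log x / x) atTop (nhds 0) := by
        have := Real.tendsto_pow_log_div_mul_add_atTop 1 0 1 one_ne_zero
        simpa using this
      have h2' : Tendsto (fun n : ℕ => Real.log n / n) atTop (nhds 0) :=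
        h2.comp hnat
      simpa using h1.add h2'
    refine tendsto_of_tendsto_of_tendsto_of_le_of_le' tendsto_const_nhds hub ?_ ?_
    · filter_upwards [eventually_ge_atTop 1] with n hn
      positivity
    · filter_upwards [eventually_ge_atTop 1] with n hn
      have hn0 : (0:ℝ) < (n : ℝ) := by exact_mod_cast Nat.lt_of_lt_of_le Nat.zero_lt_one hn
      have hb := B_bound n
      have hlog : 0 ≤ 1 + Real.log n := by
        have : (1:ℝ) ≤ (n:ℝ) := by exact_mod_cast hn
        have := Real.log_nonneg this
        linarith
      calc ((n : ℝ) ^ 2)⁻¹ * ∑ m ∈ Finset.Icc 1 n, ((n - m : ℕ) : ℝ) * (m : ℝ)⁻¹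
          ≤ ((n : ℝ) ^ 2)⁻¹ * ((n : ℝ) * (1 + Real.log n)) := by
            exact mul_le_mul_of_nonneg_left hb (by positivity)
        _ = (n : ℝ)⁻¹ + Real.log n / n := by
            field_simp
  have := hA.sub hB
  simp only [sub_zero] at this
  refine this.congr fun n => ?_
  rw [Tsum_eq n, mul_sub]




/-- Asymptotics of the nested-configuration term `A₃`:
`n⁻² ∑_{1 ≤ k₁ < k₂ < ℓ₂ ≤ ℓ₁ ≤ n} 1/((ℓ₁−k₁)((ℓ₁−k₁)−(ℓ₂−k₂))) → 1/2`.
Here the sum ranges over quadruples `(k₁, k₂, ℓ₂, ℓ₁)` of integers with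
`1 ≤ k₁ < k₂ < ℓ₂ ≤ ℓ₁ ≤ n` (which forces `ℓ₁ − k₁ > ℓ₂ − k₂`). -/
theorem nested_sum_tendsto :
    Tendsto
      (fun n : ℕ =>
        ((n : ℝ) ^ 2)⁻¹ *
          ∑ q ∈ (Finset.Icc 1 n ×ˢ Finset.Icc 1 n ×ˢ Finset.Icc 1 n ×ˢ Finset.Icc 1 n).filter
              (fun q : ℕ × ℕ × ℕ × ℕ => q.1 < q.2.1 ∧ q.2.1 < q.2.2.1 ∧ q.2.2.1 ≤ q.2.2.2),
            (1 : ℝ) / (((q.2.2.2 : ℝ) - q.1)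
              * (((q.2.2.2 : ℝ) - q.1) - ((q.2.2.1 : ℝ) - q.2.1))))
      atTop (nhds (1/2)) := by
  have h := step4
  refine h.congr fun n => ?_
  rw [step1 n, step2 n, step3 n]
end

section
/- One has ∫_{[0,1]⁴} 𝟙_{t+u+v+w < 1} / ((u + w)(u + v + w)) dt du dv dw = 1/2, where 𝟙 denotes the indicator function; in particular the integrand is Lebesgue integrable on [0,1]⁴. -/
open MeasureTheory Set Real

/-!
By Tonelli, integrate out `t`, then `v`, then `w`, then `u`; every inner integral is elementary.
With `s = u + v + w` and `a = u + w`, the `t`-integral is `(1 - s)₊ / (a s)`, the `v`-integral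
is `(a - 1 - log a) / a` for `a ≤ 1` (and `0` otherwise), the `w`-integral is
`H u = (log u)² / 2 + log u + 1 - u`, and `∫₀¹ H = 1/2` since `u (log u)² / 2 + u - u² / 2` is
an antiderivative of `H` that vanishes at `0`. Working with lower Lebesgue integrals of
`ENNReal.ofReal` throughout lets the truncation `ofReal x = 0` for `x ≤ 0` produce the positive
parts, and gives integrability of the original integrand for free.
-/

theorem Real.exp_le_quadratic_of_nonpos {x : ℝ} (hx : x ≤ 0) : exp x ≤ 1 + x + x ^ 2 / 2 := by
  have hanti : Antitone fun y : ℝ => 1 + y + y ^ 2 / 2 - exp y := by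
    refine antitone_of_hasDerivAt_nonpos (f' := fun y => 1 + y - exp y) (fun y => ?_)
      fun y => show 1 + y - exp y ≤ 0 by linarith [add_one_le_exp y]
    exact ((((hasDerivAt_id' y).const_add 1).add ((hasDerivAt_pow 2 y).div_const 2)).sub
      (hasDerivAt_exp y)).congr_deriv (by norm_num)
  simpa using hanti hx

theorem Real.continuousOn_mul_log_sq : ContinuousOn (fun x : ℝ => x * log x ^ 2) (Ici 0) := by
  have hcont : Continuous fun x : ℝ => 4 * (√x * log √x) ^ 2 :=
    continuous_const.mul ((continuous_mul_log.comp continuous_sqrt).pow 2)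
  refine hcont.continuousOn.congr fun x (hx : 0 ≤ x) => ?_
  dsimp only
  rw [log_sqrt hx, mul_pow, sq_sqrt hx]
  ring

theorem setLIntegral_Icc_ofReal_eq_sub_of_hasDerivAt_of_nonneg {f f' : ℝ → ℝ} {a b : ℝ}
    (hab : a ≤ b) (hcont : ContinuousOn f (Icc a b))
    (hderiv : ∀ x ∈ Ioo a b, HasDerivAt f (f' x) x) (hf' : ∀ x ∈ Ioo a b, 0 ≤ f' x) :
    ∫⁻ x in Icc a b, ENNReal.ofReal (f' x) = ENNReal.ofReal (f b - f a) := by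
  have hint : IntegrableOn f' (Ioc a b) :=
    intervalIntegral.integrableOn_deriv_of_nonneg hcont hderiv hf'
  rw [setLIntegral_congr Ioo_ae_eq_Icc.symm, ← ofReal_integral_eq_lintegral_ofReal
    (hint.mono_set Ioo_subset_Ioc_self) ((ae_restrict_mem measurableSet_Ioo).mono hf'),
    ← integral_Ioc_eq_integral_Ioo, ← intervalIntegral.integral_of_le hab,
    intervalIntegral.integral_eq_sub_of_hasDerivAt_of_le hab hcont hderiv
      ((intervalIntegrable_iff_integrableOn_Ioc_of_le hab).mpr hint)]

theorem setLIntegral_Icc_eq_of_eq_zero_on_Ioc {F : ℝ → ENNReal} {a b c : ℝ} (hac : a ≤ c)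
    (hcb : c ≤ b) (hF : ∀ x ∈ Ioc c b, F x = 0) :
    ∫⁻ x in Icc a b, F x = ∫⁻ x in Icc a c, F x := by
  have hdisj : Disjoint (Icc a c) (Ioc c b) :=
    disjoint_left.mpr fun _ h₁ h₂ => not_lt.mpr h₁.2 h₂.1
  rw [← Icc_union_Ioc_eq_Icc hac hcb, lintegral_union measurableSet_Ioc hdisj,
    setLIntegral_congr_fun measurableSet_Ioc hF, lintegral_zero, add_zero]

theorem setLIntegral_Icc_ofReal_ite_lt {a b c d : ℝ} (hc : 0 ≤ c) (hd : d ≤ b) :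
    ∫⁻ t in Icc a b, ENNReal.ofReal (if t < d then c else 0) =
      ENNReal.ofReal (c * (d - a)) := by
  have hind : (fun t => ENNReal.ofReal (if t < d then c else 0)) =
      (Iio d).indicator fun _ => ENNReal.ofReal c := by
    ext t
    by_cases ht : t < d <;> simp [ht]
  rw [hind, lintegral_indicator measurableSet_Iio, Measure.restrict_restrict measurableSet_Iio,
    setLIntegral_const, show Iio d ∩ Icc a b = Ico a d by grind, Real.volume_Ico,
    ENNReal.ofReal_mul hc]

theorem integrable_and_integral_eq_of_lintegral_ofReal_eq {α : Type*} [MeasurableSpace α]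
    {μ : Measure α} {f : α → ℝ} {r : ℝ} (hr : 0 ≤ r) (hfm : AEStronglyMeasurable f μ)
    (hf : 0 ≤ᵐ[μ] f) (h : ∫⁻ x, ENNReal.ofReal (f x) ∂μ = ENNReal.ofReal r) :
    Integrable f μ ∧ ∫ x, f x ∂μ = r :=
  ⟨(lintegral_ofReal_ne_top_iff_integrable hfm hf).mp (h ▸ ENNReal.ofReal_ne_top),
    by rw [integral_eq_lintegral_of_nonneg_ae hf hfm, h, ENNReal.toReal_ofReal hr]⟩

theorem setLIntegral_ofReal_ite_add_lt_one {u v w : ℝ} (hu : 0 ≤ u) (hv : 0 ≤ v)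
    (hw : 0 ≤ w) :
    ∫⁻ t in Icc 0 1,
        ENNReal.ofReal (if t + u + v + w < 1 then 1 / ((u + w) * (u + v + w)) else 0) =
      ENNReal.ofReal ((1 - (u + w + v)) / ((u + w) * (u + w + v))) := by
  have hlt : ∀ t : ℝ, t + u + v + w < 1 ↔ t < 1 - (u + w + v) := fun t => by
    constructor <;> intro <;> linarith
  simp_rw [hlt]
  rw [setLIntegral_Icc_ofReal_ite_lt (by positivity) (by linarith)]
  congr 1
  ring

theorem setLIntegral_ofReal_one_sub_div_of_one_le {a : ℝ} (ha : 1 ≤ a) :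
    ∫⁻ v in Icc 0 1, ENNReal.ofReal ((1 - (a + v)) / (a * (a + v))) = 0 := by
  rw [setLIntegral_congr_fun measurableSet_Icc (g := fun _ => 0) fun v hv =>
    ENNReal.ofReal_eq_zero.mpr (div_nonpos_of_nonpos_of_nonneg (by linarith [hv.1])
      (by nlinarith [hv.1])), lintegral_zero]

theorem setLIntegral_ofReal_one_sub_div_of_le_one {a : ℝ} (ha : 0 < a) (ha1 : a ≤ 1) :
    ∫⁻ v in Icc 0 1, ENNReal.ofReal ((1 - (a + v)) / (a * (a + v))) =
      ENNReal.ofReal ((a - 1 - log a) / a) := by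
  have hpos : ∀ v ∈ Icc (0 : ℝ) (1 - a), 0 < a + v := fun v hv => by linarith [hv.1]
  rw [setLIntegral_Icc_eq_of_eq_zero_on_Ioc (c := 1 - a) (by linarith) (by linarith) fun v hv =>
      ENNReal.ofReal_eq_zero.mpr (div_nonpos_of_nonpos_of_nonneg (by linarith [hv.1])
        (by nlinarith [hv.1])),
    setLIntegral_Icc_ofReal_eq_sub_of_hasDerivAt_of_nonneg (f := fun v => (log (a + v) - v) / a)
      (by linarith)
      (((continuousOn_log.comp (by fun_prop) fun v hv => (hpos v hv).ne').sub
        continuousOn_id).div_const a)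
      (fun v hv => have hv' := (hpos v (Ioo_subset_Icc_self hv)).ne'
        ((((hasDerivAt_id' v).const_add a).log hv').sub (hasDerivAt_id' v)).div_const a
          |>.congr_deriv (by field_simp))
      (fun v hv => div_nonneg (by linarith [hv.2]) (by nlinarith [hv.1]))]
  congr 1
  simp only [add_sub_cancel, log_one, add_zero, sub_zero]
  ring

theorem setLIntegral_setLIntegral_ofReal_one_sub_div {u : ℝ} (hu : 0 < u) (hu1 : u ≤ 1) :
    ∫⁻ w in Icc 0 1, ∫⁻ v in Icc 0 1,
        ENNReal.ofReal ((1 - (u + w + v)) / ((u + w) * (u + w + v))) =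
      ENNReal.ofReal (log u ^ 2 / 2 + log u + 1 - u) := by
  have hpos : ∀ w ∈ Icc (0 : ℝ) (1 - u), 0 < u + w := fun w hw => by linarith [hw.1]
  rw [setLIntegral_Icc_eq_of_eq_zero_on_Ioc (c := 1 - u) (by linarith) (by linarith) fun w hw =>
      setLIntegral_ofReal_one_sub_div_of_one_le (by linarith [hw.1]),
    setLIntegral_congr_fun measurableSet_Icc fun w hw =>
      setLIntegral_ofReal_one_sub_div_of_le_one (hpos w hw) (by linarith [hw.2]),
    setLIntegral_Icc_ofReal_eq_sub_of_hasDerivAt_of_nonneg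
      (f := fun w => u + w - log (u + w) ^ 2 / 2 - log (u + w)) (by linarith) ?_ ?_ ?_]
  · congr 1
    simp only [add_sub_cancel, log_one, add_zero]
    ring
  · have hlog : ContinuousOn (fun w => log (u + w)) (Icc 0 (1 - u)) :=
      continuousOn_log.comp (by fun_prop) fun w hw => (hpos w hw).ne'
    exact ((continuousOn_const.add continuousOn_id).sub ((hlog.pow 2).div_const 2)).sub hlog
  · intro w hw
    have hw' := (hpos w (Ioo_subset_Icc_self hw)).ne'
    have hlog := ((hasDerivAt_id' w).const_add u).log hw'
    refine (((hasDerivAt_id' w).const_add u).sub ((hlog.pow 2).div_const 2)).sub hlog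
      |>.congr_deriv ?_
    field_simp
    ring
  · intro w hw
    have hw' := hpos w (Ioo_subset_Icc_self hw)
    exact div_nonneg (by linarith [log_le_sub_one_of_pos hw']) hw'.le

theorem setLIntegral_ofReal_log_sq_div_two_add_log_add_one_sub :
    ∫⁻ u in Icc 0 1, ENNReal.ofReal (log u ^ 2 / 2 + log u + 1 - u) =
      ENNReal.ofReal (1 / 2) := by
  rw [setLIntegral_Icc_ofReal_eq_sub_of_hasDerivAt_of_nonneg
    (f := fun u => u * log u ^ 2 / 2 + u - u ^ 2 / 2) zero_le_one ?_ ?_ ?_]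
  · norm_num
  · exact (((continuousOn_mul_log_sq.mono Icc_subset_Ici_self).div_const 2).add
      continuousOn_id).sub (by fun_prop)
  · intro u hu
    have hlog := hasDerivAt_log hu.1.ne'
    refine ((((hasDerivAt_id' u).mul (hlog.pow 2)).div_const 2).add (hasDerivAt_id' u)).sub
      ((hasDerivAt_pow 2 u).div_const 2) |>.congr_deriv ?_
    field_simp [hu.1.ne']
    simp only [Pi.pow_apply]
    ring
  · intro u hu
    have := exp_le_quadratic_of_nonpos (log_nonpos hu.1.le hu.2.le)
    rw [exp_log hu.1] at this
    linarith

theorem setLIntegral_unitCube_ofReal_one_sub_div :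
    ∫⁻ q in Icc 0 1 ×ˢ Icc 0 1 ×ˢ Icc (0 : ℝ) 1, ENNReal.ofReal
        ((1 - (q.1 + q.2.2 + q.2.1)) / ((q.1 + q.2.2) * (q.1 + q.2.2 + q.2.1))) =
      ENNReal.ofReal (1 / 2) := by
  rw [Measure.volume_eq_prod, setLIntegral_prod _ (by fun_prop)]
  simp_rw [Measure.volume_eq_prod]
  rw [lintegral_congr fun u => setLIntegral_prod_symm _ (by fun_prop),
    setLIntegral_congr Ioc_ae_eq_Icc.symm,
    setLIntegral_congr_fun measurableSet_Ioc fun u hu =>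
      setLIntegral_setLIntegral_ofReal_one_sub_div hu.1 hu.2,
    setLIntegral_congr Ioc_ae_eq_Icc, setLIntegral_ofReal_log_sq_div_two_add_log_add_one_sub]

theorem setLIntegral_unitHypercube_ofReal_ite_add_lt_one :
    ∫⁻ p in Icc 0 1 ×ˢ Icc 0 1 ×ˢ Icc 0 1 ×ˢ Icc (0 : ℝ) 1, ENNReal.ofReal
        (if p.1 + p.2.1 + p.2.2.1 + p.2.2.2 < 1 then
          1 / ((p.2.1 + p.2.2.2) * (p.2.1 + p.2.2.1 + p.2.2.2))
        else 0) =
      ENNReal.ofReal (1 / 2) := by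
  have hcube : MeasurableSet (Icc 0 1 ×ˢ Icc 0 1 ×ˢ Icc 0 1 : Set (ℝ × ℝ × ℝ)) :=
    measurableSet_Icc.prod (measurableSet_Icc.prod measurableSet_Icc)
  rw [Measure.volume_eq_prod, setLIntegral_prod_symm _ (Measurable.ite
      (measurableSet_lt (by fun_prop) (by fun_prop)) (by fun_prop) (by fun_prop)
      |>.ennreal_ofReal.aemeasurable),
    setLIntegral_congr_fun hcube fun q ⟨⟨hu, _⟩, ⟨hv, _⟩, ⟨hw, _⟩⟩ =>
      setLIntegral_ofReal_ite_add_lt_one hu hv hw]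
  exact setLIntegral_unitCube_ofReal_one_sub_div

/-- The four-dimensional integral arising from the nested-configuration term `A₃`:
`∫_{[0,1]⁴} 𝟙_{t+u+v+w<1}/((u+w)(u+v+w)) dt du dv dw = 1/2`; in particular the
integrand is Lebesgue integrable on `[0,1]⁴`. Here `p = (t, u, v, w)`. -/
theorem integral_A3_indicator :
    IntegrableOn
      (fun p : ℝ × ℝ × ℝ × ℝ =>
        if p.1 + p.2.1 + p.2.2.1 + p.2.2.2 < 1 then
          1 / ((p.2.1 + p.2.2.2) * (p.2.1 + p.2.2.1 + p.2.2.2))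
        else 0)
      (Set.Icc 0 1 ×ˢ Set.Icc 0 1 ×ˢ Set.Icc 0 1 ×ˢ Set.Icc 0 1) volume
    ∧ (∫ p in (Set.Icc 0 1 ×ˢ Set.Icc 0 1 ×ˢ Set.Icc 0 1 ×ˢ Set.Icc 0 1 :
          Set (ℝ × ℝ × ℝ × ℝ)),
        if p.1 + p.2.1 + p.2.2.1 + p.2.2.2 < 1 then
          1 / ((p.2.1 + p.2.2.2) * (p.2.1 + p.2.2.1 + p.2.2.2))
        else 0) = 1/2 := by
  refine integrable_and_integral_eq_of_lintegral_ofReal_eq (by norm_num)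
    (Measurable.ite (measurableSet_lt (by fun_prop) (by fun_prop)) (by fun_prop)
      (by fun_prop)).aestronglyMeasurable ?_
    setLIntegral_unitHypercube_ofReal_ite_add_lt_one
  filter_upwards [ae_restrict_mem (by measurability)] with p ⟨_, ⟨hu, _⟩, ⟨hv, _⟩, ⟨hw, _⟩⟩
  split_ifs <;> positivity
end
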